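/- arXiv:2209.08107 — 6 statements merged into one kernel-verified Lean document; each statement's English description precedes it below -/
import Mathlib

section
/- Let Θ be a nonnegative random variable on a probability space, let Y be a mixed Poisson random variable with random parameter Θ, and let Z be a Poisson random variable with mean λ ≥ 0. Then the following are equivalent: (i) Y stochastically dominates Z, i.e. for every n ∈ ℕ, Σ_{k=0}^n E[Θ^k e^{−Θ}]/k! ≤ Σ_{k=0}^n e^{−λ} λ^k/k!; (ii) P(Y = 0) ≤ P(Z = 0); (iii) E[e^{−Θ}] ≤ e^{−λ}. -/
open MeasureTheory
open MeasureTheory Finset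

noncomputable def Taux (n : ℕ) (t : ℝ) : ℝ := ∑ k ∈ Finset.range n, t ^ k / (Nat.factorial k : ℝ)

lemma Taux_deriv (n : ℕ) (t : ℝ) : HasDerivAt (Taux (n+1)) (Taux n t) t := by
  have h : HasDerivAt (Taux (n+1))
      (∑ k ∈ Finset.range (n+1), (k : ℝ) * t ^ (k-1) / (Nat.factorial k : ℝ)) t := by
    apply HasDerivAt.fun_sum
    intro k _
    exact (hasDerivAt_pow k t).div_const _
  convert h using 1
  rw [Finset.sum_range_succ']
  simp only [Nat.factorial_succ, Taux]
  rw [show ((0:ℕ):ℝ) * t ^ (0-1) / (Nat.factorial 0 : ℝ) = 0 by simp]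
  rw [add_zero]
  apply Finset.sum_congr rfl
  intro k _
  have hk : (Nat.factorial (k+1) : ℝ) = (k+1) * Nat.factorial k := by
    push_cast [Nat.factorial_succ]; ring
  field_simp
  push_cast; ring

lemma Taux_succ (n : ℕ) (t : ℝ) :
    Taux (n+1) t = Taux n t + t ^ n / (Nat.factorial n : ℝ) := Finset.sum_range_succ _ _

lemma haux_deriv (n : ℕ) (c : ℝ) (t : ℝ) :
    HasDerivAt (fun t => Real.exp (-t) * Taux (n+1) t - c * Real.exp (-t))
      (Real.exp (-t) * (c - t ^ n / (Nat.factorial n : ℝ))) t := by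
  have he : HasDerivAt (fun t : ℝ => Real.exp (-t)) (-Real.exp (-t)) t := by
    simpa [Function.comp_def] using (Real.hasDerivAt_exp (-t)).comp t (hasDerivAt_neg t)
  have h := ((he.mul (Taux_deriv n t)).sub (he.const_mul c))
  refine h.congr_deriv ?_
  rw [Taux_succ]
  ring

lemma key_ineq (n : ℕ) (μ θ : ℝ) (hμ : 0 ≤ μ) (hθ : 0 ≤ θ) :
    Real.exp (-θ) * Taux (n+1) θ + μ ^ n / (Nat.factorial n : ℝ) * (Real.exp (-μ) - Real.exp (-θ))
      ≤ Real.exp (-μ) * Taux (n+1) μ := by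
  set c : ℝ := μ ^ n / (Nat.factorial n : ℝ) with hc
  set h : ℝ → ℝ := fun t => Real.exp (-t) * Taux (n+1) t - c * Real.exp (-t) with hh
  have hdiff : ∀ t : ℝ, HasDerivAt h (Real.exp (-t) * (c - t ^ n / (Nat.factorial n : ℝ))) t :=
    fun t => haux_deriv n c t
  have hcont : Continuous h := by
    have : Differentiable ℝ h := fun t => (hdiff t).differentiableAt
    exact this.continuous
  have hfac : (0:ℝ) < (Nat.factorial n : ℝ) := by positivity
  have key : h θ ≤ h μ := by
    rcases le_total θ μ with hle | hle
    · have hmono : MonotoneOn h (Set.Icc 0 μ) := by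
        apply monotoneOn_of_deriv_nonneg (convex_Icc 0 μ) hcont.continuousOn
        · exact fun x _ => (hdiff x).differentiableAt.differentiableWithinAt
        · intro x hx
          rw [interior_Icc] at hx
          rw [(hdiff x).deriv]
          have : x ^ n ≤ μ ^ n := pow_le_pow_left₀ (le_of_lt hx.1) (le_of_lt hx.2) n
          have h1 : 0 ≤ c - x ^ n / (Nat.factorial n : ℝ) := by
            rw [hc, sub_nonneg]
            gcongr
          exact mul_nonneg (Real.exp_pos _).le h1
      exact hmono ⟨hθ, hle⟩ ⟨hμ, le_refl μ⟩ hle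
    · have hanti : AntitoneOn h (Set.Ici μ) := by
        apply antitoneOn_of_deriv_nonpos (convex_Ici μ) hcont.continuousOn
        · exact fun x _ => (hdiff x).differentiableAt.differentiableWithinAt
        · intro x hx
          rw [interior_Ici] at hx
          rw [(hdiff x).deriv]
          have : μ ^ n ≤ x ^ n := pow_le_pow_left₀ hμ (le_of_lt hx) n
          have h1 : c - x ^ n / (Nat.factorial n : ℝ) ≤ 0 := by
            rw [hc, sub_nonpos]
            gcongr
          exact mul_nonpos_of_nonneg_of_nonpos (Real.exp_pos _).le h1
      exact hanti (Set.mem_Ici.mpr (le_refl μ)) (Set.mem_Ici.mpr hle) hle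
  simp only [hh] at key
  linarith


/-- Let `Θ` be a nonnegative random variable, `Y` a mixed Poisson random
variable with random parameter `Θ`, and `Z` a Poisson random variable with mean `lam ≥ 0`.
Then the following are equivalent: (i) `Y` stochastically dominates `Z`;
(ii) `P(Y = 0) ≤ P(Z = 0)`; (iii) `E[e^{-Θ}] ≤ e^{-lam}`. -/
theorem mixed_poisson_domination_tfae
    {Ω Ω' : Type*} [MeasurableSpace Ω] [MeasurableSpace Ω']
    (P : Measure Ω) (P' : Measure Ω') [IsProbabilityMeasure P] [IsProbabilityMeasure P']
    (Θ : Ω → ℝ) (hΘmeas : Measurable Θ) (hΘnonneg : ∀ ω, 0 ≤ Θ ω)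
    (hΘint : ∀ k : ℕ, Integrable (fun ω => Θ ω ^ k * Real.exp (-Θ ω)) P)
    (lam : ℝ) (hlam : 0 ≤ lam)
    (Y : Ω → ℕ) (Z : Ω' → ℕ)
    (hY : ∀ k : ℕ, (P {ω | Y ω = k}).toReal
        = (∫ ω, Θ ω ^ k * Real.exp (-Θ ω) ∂P) / (Nat.factorial k))
    (hZ : ∀ k : ℕ, (P' {ω' | Z ω' = k}).toReal
        = Real.exp (-lam) * lam ^ k / (Nat.factorial k)) :
    [ (∀ n : ℕ, (P {ω | Y ω ≤ n}).toReal ≤ (P' {ω' | Z ω' ≤ n}).toReal),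
      (P {ω | Y ω = 0}).toReal ≤ (P' {ω' | Z ω' = 0}).toReal,
      (∫ ω, Real.exp (-Θ ω) ∂P) ≤ Real.exp (-lam) ].TFAE := by
  tfae_have 1 → 2 := by
    intro h
    simpa [Nat.le_zero] using h 0
  tfae_have 2 → 3 := by
    intro h
    rw [hY 0, hZ 0] at h
    simpa using h
  tfae_have 3 → 1 := by
    intro hv n
    have hint0 : Integrable (fun ω => Real.exp (-Θ ω)) P := by simpa using hΘint 0
    set v := ∫ ω, Real.exp (-Θ ω) ∂P with hvdef
    have hvpos : 0 < v := by
      rw [hvdef, integral_pos_iff_support_of_nonneg (fun ω => (Real.exp_pos _).le) hint0]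
      have : Function.support (fun ω => Real.exp (-Θ ω)) = Set.univ := by
        ext ω; simp [Function.support, (Real.exp_pos _).ne']
      rw [this]
      simp
    set μ0 : ℝ := -Real.log v with hμ0def
    have hexpμ0 : Real.exp (-μ0) = v := by rw [hμ0def, neg_neg, Real.exp_log hvpos]
    have hμ0lam : lam ≤ μ0 := by
      have h1 : Real.log v ≤ Real.log (Real.exp (-lam)) := Real.log_le_log hvpos hv
      rw [Real.log_exp] at h1
      rw [hμ0def]; linarith
    have hμ0 : 0 ≤ μ0 := le_trans hlam hμ0lam
    -- Y side: P(Y ≤ n) ≤ ∑_{k ≤ n} P(Y = k)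
    have hYle : (P {ω | Y ω ≤ n}).toReal ≤ ∑ k ∈ Finset.range (n+1), (P {ω | Y ω = k}).toReal := by
      have hsub : {ω | Y ω ≤ n} ⊆ ⋃ k ∈ Finset.range (n+1), {ω | Y ω = k} := by
        intro ω hω
        simp only [Set.mem_iUnion, Finset.mem_range, Set.mem_setOf_eq]
        exact ⟨Y ω, Nat.lt_succ_of_le hω, rfl⟩
      have h1 : P {ω | Y ω ≤ n} ≤ ∑ k ∈ Finset.range (n+1), P {ω | Y ω = k} :=
        (measure_mono hsub).trans (measure_biUnion_finset_le _ _)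
      have h2 := ENNReal.toReal_mono
        (ENNReal.sum_ne_top.mpr fun k _ => measure_ne_top P _) h1
      rwa [ENNReal.toReal_sum (fun k _ => measure_ne_top P _)] at h2
    -- Core analytic inequality
    have hcore : ∑ k ∈ Finset.range (n+1), (P {ω | Y ω = k}).toReal
        ≤ ∑ k ∈ Finset.range (n+1), (P' {ω' | Z ω' = k}).toReal := by
      simp_rw [hY, hZ]
      have hIk : ∀ k : ℕ, Integrable (fun ω => Θ ω ^ k * Real.exp (-Θ ω) / (Nat.factorial k : ℝ)) P :=
        fun k => (hΘint k).div_const _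
      have hfun : (fun ω => Real.exp (-Θ ω) * Taux (n+1) (Θ ω))
          = fun ω => ∑ k ∈ Finset.range (n+1), Θ ω ^ k * Real.exp (-Θ ω) / (Nat.factorial k : ℝ) := by
        funext ω
        rw [Taux, Finset.mul_sum]
        exact Finset.sum_congr rfl fun k _ => by ring
      have hintL : Integrable (fun ω => Real.exp (-Θ ω) * Taux (n+1) (Θ ω)) P := by
        rw [hfun]; exact integrable_finset_sum _ fun k _ => hIk k
      have hL : ∑ k ∈ Finset.range (n+1), (∫ ω, Θ ω ^ k * Real.exp (-Θ ω) ∂P) / (Nat.factorial k : ℝ)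
          = ∫ ω, Real.exp (-Θ ω) * Taux (n+1) (Θ ω) ∂P := by
        rw [hfun, integral_finset_sum _ fun k _ => hIk k]
        exact Finset.sum_congr rfl fun k _ => (integral_div _ _).symm
      have hR : ∑ k ∈ Finset.range (n+1), Real.exp (-lam) * lam ^ k / (Nat.factorial k : ℝ)
          = Real.exp (-lam) * Taux (n+1) lam := by
        rw [Taux, Finset.mul_sum]
        exact Finset.sum_congr rfl fun k _ => by ring
      rw [hL, hR]
      set c : ℝ := μ0 ^ n / (Nat.factorial n : ℝ) with hcdef
      set d : ℝ := Real.exp (-μ0) * Taux (n+1) μ0 - c * Real.exp (-μ0) with hddef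
      have hpt : ∀ ω, Real.exp (-Θ ω) * Taux (n+1) (Θ ω)
          ≤ d + c * Real.exp (-Θ ω) := by
        intro ω
        have := key_ineq n μ0 (Θ ω) hμ0 (hΘnonneg ω)
        rw [hddef]
        linarith
      have hintR : Integrable (fun ω => d + c * Real.exp (-Θ ω)) P :=
        (integrable_const _).add (hint0.const_mul _)
      have hstep := integral_mono hintL hintR (fun ω => hpt ω)
      rw [integral_add (integrable_const _) (hint0.const_mul _), integral_const,
          integral_const_mul] at hstep
      simp only [probReal_univ, measure_univ, ENNReal.toReal_one, smul_eq_mul, one_mul] at hstep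
      rw [← hvdef] at hstep
      have hstep2 : ∫ ω, Real.exp (-Θ ω) * Taux (n+1) (Θ ω) ∂P
          ≤ Real.exp (-μ0) * Taux (n+1) μ0 := by
        rw [hexpμ0]
        rw [hddef, hexpμ0] at hstep
        linarith
      have hfin : Real.exp (-μ0) * Taux (n+1) μ0 ≤ Real.exp (-lam) * Taux (n+1) lam := by
        have hk := key_ineq n lam μ0 hlam hμ0
        have hmono : Real.exp (-μ0) ≤ Real.exp (-lam) := Real.exp_le_exp.mpr (by linarith)
        have hnn : 0 ≤ lam ^ n / (Nat.factorial n : ℝ) := by positivity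
        nlinarith [mul_nonneg hnn (sub_nonneg.mpr hmono)]
      linarith
    -- Z side: ∑_{k ≤ n} P(Z = k) ≤ P(Z ≤ n)
    have hZge : ∑ k ∈ Finset.range (n+1), (P' {ω' | Z ω' = k}).toReal
        ≤ (P' {ω' | Z ω' ≤ n}).toReal := by
      set r : ℕ → ℝ := fun k => Real.exp (-lam) * lam ^ k / (Nat.factorial k : ℝ) with hrdef
      have hrnn : ∀ k, 0 ≤ r k := fun k => by
        rw [hrdef]
        positivity
      have hrsum : Summable r := by
        have := (Real.summable_pow_div_factorial lam).mul_left (Real.exp (-lam))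
        simpa [hrdef, mul_div_assoc] using this
      have hrtsum : ∑' k, r k = 1 := by
        have h1 : ∑' k, r k = Real.exp (-lam) * ∑' k : ℕ, lam ^ k / (Nat.factorial k : ℝ) := by
          rw [← tsum_mul_left]
          simp [hrdef, mul_div_assoc]
        have h2 : ∑' k : ℕ, lam ^ k / (Nat.factorial k : ℝ) = Real.exp lam := by
          rw [Real.exp_eq_exp_ℝ, NormedSpace.exp_eq_tsum_div]
        rw [h1, h2, ← Real.exp_add]
        simp
      set s : ℝ := ∑ k ∈ Finset.range (n+1), r k with hsdef
      have hs1 : s ≤ 1 := by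
        rw [hsdef, ← hrtsum]
        exact Summable.sum_le_tsum _ (fun k _ => hrnn k) hrsum
      have hs0 : 0 ≤ s := Finset.sum_nonneg fun k _ => hrnn k
      have htailsum : ∑' k, r (k + (n+1)) = 1 - s := by
        have h3 := hrsum.sum_add_tsum_nat_add (n+1)
        rw [hsdef]
        linarith [h3, hrtsum]
      have hmeq : ∀ k : ℕ, P' {ω' | Z ω' = k} = ENNReal.ofReal (r k) := by
        intro k
        have hk : (P' {ω' | Z ω' = k}).toReal = r k := by
          rw [hrdef]; exact hZ k
        rw [← hk, ENNReal.ofReal_toReal (measure_ne_top P' _)]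
      have htail : P' {ω' | n < Z ω'} ≤ ENNReal.ofReal (1 - s) := by
        have hsub : {ω' | n < Z ω'} ⊆ ⋃ k : ℕ, {ω' | Z ω' = k + (n+1)} := by
          intro ω' hω'
          simp only [Set.mem_setOf_eq] at hω'
          simp only [Set.mem_iUnion, Set.mem_setOf_eq]
          exact ⟨Z ω' - (n+1), by omega⟩
        calc P' {ω' | n < Z ω'} ≤ ∑' k : ℕ, P' {ω' | Z ω' = k + (n+1)} :=
              (measure_mono hsub).trans (measure_iUnion_le _)
          _ = ∑' k : ℕ, ENNReal.ofReal (r (k + (n+1))) := by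
              exact tsum_congr fun k => hmeq _
          _ = ENNReal.ofReal (∑' k : ℕ, r (k + (n+1))) :=
              (ENNReal.ofReal_tsum_of_nonneg (fun k => hrnn _)
                ((summable_nat_add_iff (n+1)).mpr hrsum)).symm
          _ = ENNReal.ofReal (1 - s) := by rw [htailsum]
      have huniv : (1 : ENNReal) ≤ P' {ω' | Z ω' ≤ n} + P' {ω' | n < Z ω'} := by
        have hcover : (Set.univ : Set Ω') ⊆ {ω' | Z ω' ≤ n} ∪ {ω' | n < Z ω'} := by
          intro ω' _
          rcases le_or_gt (Z ω') n with h | h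
          · exact Or.inl h
          · exact Or.inr h
        calc (1 : ENNReal) = P' Set.univ := (measure_univ).symm
          _ ≤ P' ({ω' | Z ω' ≤ n} ∪ {ω' | n < Z ω'}) := measure_mono hcover
          _ ≤ _ := measure_union_le _ _
      have hkey : ENNReal.ofReal s ≤ P' {ω' | Z ω' ≤ n} := by
        have h1 : ENNReal.ofReal s + ENNReal.ofReal (1 - s) = 1 := by
          rw [← ENNReal.ofReal_add hs0 (by linarith)]
          norm_num
        have h2 : ENNReal.ofReal s + ENNReal.ofReal (1 - s)
            ≤ P' {ω' | Z ω' ≤ n} + ENNReal.ofReal (1 - s) := by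
          rw [h1]
          exact huniv.trans (add_le_add le_rfl htail)
        exact (ENNReal.add_le_add_iff_right ENNReal.ofReal_ne_top).mp h2
      have := (ENNReal.ofReal_le_iff_le_toReal (measure_ne_top P' _)).mp hkey
      calc ∑ k ∈ Finset.range (n+1), (P' {ω' | Z ω' = k}).toReal
          = s := by
            rw [hsdef]
            refine Finset.sum_congr rfl fun k _ => ?_
            rw [hrdef]; exact hZ k
        _ ≤ _ := this
    exact hYle.trans (hcore.trans hZge)
  tfae_finish
end

section
/- Fix a real constant c > 0, an integer d ≥ 2, and a nonnegative real-valued random variable X (almost surely finite). For every λ > 0 there exists μ_λ > 0 such that for all μ ≥ μ_λ, the mixed Poisson random variable with random parameter c·μ·d^{−X} stochastically dominates a Poisson random variable with mean λ; that is, for every n ∈ ℕ, Σ_{k=0}^n E[(cμd^{−X})^k e^{−cμd^{−X}}]/k! ≤ Σ_{k=0}^n e^{−λ} λ^k/k!. -/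
open MeasureTheory

/-- Tail series `∑_{k > n} θ^k / k!`. -/
noncomputable def pSn (n : ℕ) (θ : ℝ) : ℝ :=
  ∑' k : ℕ, θ ^ (k + (n + 1)) / (Nat.factorial (k + (n + 1)))

lemma pSn_summable (n : ℕ) (θ : ℝ) :
    Summable (fun k : ℕ => θ ^ (k + (n + 1)) / (Nat.factorial (k + (n + 1)))) :=
  (_root_.summable_nat_add_iff (f := fun k : ℕ => θ ^ k / (Nat.factorial k : ℝ)) (n + 1)).2
    (Real.summable_pow_div_factorial θ)

lemma pSn_nonneg (n : ℕ) {θ : ℝ} (hθ : 0 ≤ θ) : 0 ≤ pSn n θ :=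
  tsum_nonneg fun _ => div_nonneg (pow_nonneg hθ _) (Nat.cast_nonneg _)

lemma pSn_pos (n : ℕ) {θ : ℝ} (hθ : 0 < θ) : 0 < pSn n θ := by
  refine Summable.tsum_pos (pSn_summable n θ)
    (fun k => div_nonneg (pow_nonneg hθ.le _) (Nat.cast_nonneg _)) 0 ?_
  exact div_pos (pow_pos hθ _) (by exact_mod_cast Nat.factorial_pos _)

lemma pSn_split (n : ℕ) (θ : ℝ) :
    pSn n θ = θ ^ (n + 1) / (Nat.factorial (n + 1)) + pSn (n + 1) θ := by
  rw [pSn, Summable.tsum_eq_zero_add (pSn_summable n θ)]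
  congr 1
  · simp
  · rw [pSn]
    exact tsum_congr fun k => by rw [show k + 1 + (n + 1) = k + (n + 1 + 1) from by omega]

lemma pSn_step {a b : ℝ} (ha : 0 ≤ a) (hab : a ≤ b) (n : ℕ) :
    pSn (n + 1) a * (b ^ (n + 1) / (Nat.factorial (n + 1)))
      ≤ a ^ (n + 1) / (Nat.factorial (n + 1)) * pSn (n + 1) b := by
  have hb : 0 ≤ b := ha.trans hab
  rw [pSn, pSn, ← tsum_mul_right, ← tsum_mul_left]
  refine Summable.tsum_le_tsum (fun k => ?_) ((pSn_summable (n+1) a).mul_right _)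
    ((pSn_summable (n+1) b).mul_left _)
  have hpow : a ^ (k + (n + 1 + 1)) * b ^ (n + 1) ≤ a ^ (n + 1) * b ^ (k + (n + 1 + 1)) := by
    have h1 : a ^ (k + (n + 1 + 1)) = a ^ (n + 1) * a ^ (k + 1) := by
      rw [← pow_add]; congr 1; omega
    have h2 : b ^ (k + (n + 1 + 1)) = b ^ (n + 1) * b ^ (k + 1) := by
      rw [← pow_add]; congr 1; omega
    rw [h1, h2]
    calc a ^ (n + 1) * a ^ (k + 1) * b ^ (n + 1)
        ≤ a ^ (n + 1) * b ^ (k + 1) * b ^ (n + 1) := by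
          have := mul_le_mul_of_nonneg_left (pow_le_pow_left₀ ha hab (k + 1))
            (pow_nonneg ha (n+1))
          nlinarith [pow_nonneg hb (n+1), pow_nonneg ha (n+1), pow_nonneg ha (k+1),
            pow_nonneg hb (k+1)]
      _ = a ^ (n + 1) * (b ^ (n + 1) * b ^ (k + 1)) := by ring
  rw [div_mul_div_comm, div_mul_div_comm, mul_comm ((Nat.factorial (n + 1)):ℝ)]
  exact (div_le_div_iff_of_pos_right (by positivity)).2 hpow

/-- Poisson upper-tail probability `P(Pois(θ) > n)`. -/
noncomputable def pEn (n : ℕ) (θ : ℝ) : ℝ := Real.exp (-θ) * pSn n θ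

lemma pEn_nonneg (n : ℕ) {θ : ℝ} (hθ : 0 ≤ θ) : 0 ≤ pEn n θ :=
  mul_nonneg (Real.exp_nonneg _) (pSn_nonneg n hθ)

lemma pEn_pos (n : ℕ) {θ : ℝ} (hθ : 0 < θ) : 0 < pEn n θ :=
  mul_pos (Real.exp_pos _) (pSn_pos n hθ)

lemma pEn_ratio_step {a b : ℝ} (ha : 0 ≤ a) (hab : a ≤ b) (n : ℕ) :
    pEn (n + 1) a * pEn n b ≤ pEn n a * pEn (n + 1) b := by
  have key : pSn (n + 1) a * pSn n b ≤ pSn n a * pSn (n + 1) b := by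
    rw [pSn_split n a, pSn_split n b]
    have h := pSn_step ha hab n
    nlinarith [pSn_nonneg (n+1) ha, pSn_nonneg (n+1) (ha.trans hab)]
  have he : 0 ≤ Real.exp (-a) * Real.exp (-b) := by positivity
  calc pEn (n + 1) a * pEn n b
      = Real.exp (-a) * Real.exp (-b) * (pSn (n + 1) a * pSn n b) := by rw [pEn, pEn]; ring
    _ ≤ Real.exp (-a) * Real.exp (-b) * (pSn n a * pSn (n + 1) b) :=
        mul_le_mul_of_nonneg_left key he
    _ = pEn n a * pEn (n + 1) b := by rw [pEn, pEn]; ring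

lemma pEn_ratio {a b : ℝ} (ha : 0 < a) (hab : a ≤ b) (n : ℕ) :
    pEn n a * pEn 0 b ≤ pEn 0 a * pEn n b := by
  have hb : 0 < b := ha.trans_le hab
  induction n with
  | zero => exact le_refl _
  | succ n ih =>
      have h1 := pEn_ratio_step ha.le hab n
      have h2 : pEn (n + 1) a * pEn 0 b * pEn n b ≤ pEn 0 a * pEn (n + 1) b * pEn n b := by
        calc pEn (n + 1) a * pEn 0 b * pEn n b
            = (pEn (n + 1) a * pEn n b) * pEn 0 b := by ring
          _ ≤ (pEn n a * pEn (n + 1) b) * pEn 0 b :=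
              mul_le_mul_of_nonneg_right h1 (pEn_nonneg 0 hb.le)
          _ = (pEn n a * pEn 0 b) * pEn (n + 1) b := by ring
          _ ≤ (pEn 0 a * pEn n b) * pEn (n + 1) b :=
              mul_le_mul_of_nonneg_right ih (pEn_nonneg (n+1) hb.le)
          _ = pEn 0 a * pEn (n + 1) b * pEn n b := by ring
      exact le_of_mul_le_mul_right h2 (pEn_pos n hb)

/-- Poisson CDF at `n` with mean `θ`. -/
noncomputable def pFn (n : ℕ) (θ : ℝ) : ℝ :=
  ∑ k ∈ Finset.range (n + 1), θ ^ k * Real.exp (-θ) / (Nat.factorial k)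

lemma exp_tsum' (θ : ℝ) : (∑' k : ℕ, θ ^ k / (Nat.factorial k)) = Real.exp θ := by
  rw [Real.exp_eq_exp_ℝ, NormedSpace.exp_eq_tsum_div]

lemma pFn_add_pEn (n : ℕ) (θ : ℝ) : pFn n θ + pEn n θ = 1 := by
  have h1 : pFn n θ = Real.exp (-θ) * ∑ k ∈ Finset.range (n + 1), θ ^ k / (Nat.factorial k) := by
    rw [pFn, Finset.mul_sum]
    exact Finset.sum_congr rfl fun k _ => by ring
  have h2 : (∑ k ∈ Finset.range (n + 1), θ ^ k / (Nat.factorial k)) + pSn n θ = Real.exp θ := by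
    rw [pSn, Summable.sum_add_tsum_nat_add (n + 1) (Real.summable_pow_div_factorial θ), exp_tsum']
  calc pFn n θ + pEn n θ
      = Real.exp (-θ) * ((∑ k ∈ Finset.range (n + 1), θ ^ k / (Nat.factorial k)) + pSn n θ) := by
        rw [h1, pEn]; ring
    _ = 1 := by rw [h2, Real.exp_neg, inv_mul_cancel₀ (Real.exp_ne_zero θ)]

lemma pFn_nonneg (n : ℕ) {θ : ℝ} (hθ : 0 ≤ θ) : 0 ≤ pFn n θ :=
  Finset.sum_nonneg fun _ _ => div_nonneg (mul_nonneg (pow_nonneg hθ _) (Real.exp_nonneg _))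
    (Nat.cast_nonneg _)

lemma pFn_le_one (n : ℕ) {θ : ℝ} (hθ : 0 ≤ θ) : pFn n θ ≤ 1 := by
  have := pFn_add_pEn n θ
  have := pEn_nonneg n hθ
  linarith

lemma hasDerivAt_pFn (n : ℕ) (θ : ℝ) :
    HasDerivAt (pFn n) (-(θ ^ n * Real.exp (-θ) / (Nat.factorial n))) θ := by
  induction n with
  | zero =>
      have h : HasDerivAt (fun t : ℝ => Real.exp (-t)) (-Real.exp (-θ)) θ := by
        simpa [Function.comp_def] using (Real.hasDerivAt_exp (-θ)).comp θ (hasDerivAt_neg θ)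
      have heq : pFn 0 = fun t : ℝ => Real.exp (-t) := by
        funext t; simp [pFn]
      rw [heq]
      simpa using h
  | succ n ih =>
      have heq : pFn (n + 1) = fun t => pFn n t +
          t ^ (n + 1) * Real.exp (-t) / (Nat.factorial (n + 1)) := by
        funext t; rw [pFn, pFn, Finset.sum_range_succ]
      rw [heq]
      have hexp : HasDerivAt (fun t : ℝ => Real.exp (-t)) (-Real.exp (-θ)) θ := by
        simpa [Function.comp_def] using (Real.hasDerivAt_exp (-θ)).comp θ (hasDerivAt_neg θ)
      have hpow : HasDerivAt (fun t : ℝ => t ^ (n + 1)) (((n:ℝ) + 1) * θ ^ n) θ := by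
        simpa using hasDerivAt_pow (n + 1) θ
      have hterm : HasDerivAt
          (fun t : ℝ => t ^ (n + 1) * Real.exp (-t) / (Nat.factorial (n + 1)))
          ((((n:ℝ) + 1) * θ ^ n * Real.exp (-θ) + θ ^ (n + 1) * (-Real.exp (-θ)))
            / (Nat.factorial (n + 1))) θ :=
        (hpow.mul hexp).div_const _
      have hsum := ih.add hterm
      refine hsum.congr_deriv ?_
      have hfs : ((Nat.factorial (n + 1) : ℝ)) = ((n : ℝ) + 1) * (Nat.factorial n : ℝ) := by
        rw [Nat.factorial_succ]; push_cast; ring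
      have hf0 : ((Nat.factorial n : ℝ)) ≠ 0 := by exact_mod_cast (Nat.factorial_pos n).ne'
      have hf1 : ((n : ℝ) + 1) ≠ 0 := by positivity
      rw [hfs]
      field_simp
      ring

lemma pFn_anti (n : ℕ) {a b : ℝ} (ha : 0 ≤ a) (hab : a ≤ b) : pFn n b ≤ pFn n a := by
  have hder : ∀ t : ℝ, HasDerivAt (pFn n) (-(t ^ n * Real.exp (-t) / (Nat.factorial n))) t :=
    hasDerivAt_pFn n
  have hdiff : Differentiable ℝ (pFn n) := fun t => (hder t).differentiableAt
  refine antitoneOn_of_deriv_nonpos (convex_Ici 0) hdiff.continuous.continuousOn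
    (hdiff.differentiableOn) (fun t ht => ?_) ha (ha.trans hab) hab
  rw [(hder t).deriv]
  have ht' : (0:ℝ) < t := by simpa using ht
  have : 0 ≤ t ^ n * Real.exp (-t) / (Nat.factorial n) := by positivity
  linarith

lemma pEn_zero_eq (θ : ℝ) : pEn 0 θ = 1 - Real.exp (-θ) := by
  have h := pFn_add_pEn 0 θ
  have h0 : pFn 0 θ = Real.exp (-θ) := by simp [pFn]
  linarith [h, h0.symm.le]

lemma pEn_tail_bound {a b p : ℝ} (ha : 0 < a) (hab : a ≤ b) (hp : 0 < p)
    (hchoice : 1 - Real.exp (-a) ≤ p * (1 - Real.exp (-b))) (n : ℕ) :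
    pEn n a ≤ p * pEn n b := by
  have hb : 0 < b := ha.trans_le hab
  have h := pEn_ratio ha hab n
  have h0b : 0 < pEn 0 b := pEn_pos 0 hb
  have hc : pEn 0 a ≤ p * pEn 0 b := by
    rw [pEn_zero_eq, pEn_zero_eq]; exact hchoice
  have h2 : pEn n a * pEn 0 b ≤ (p * pEn n b) * pEn 0 b := by
    calc pEn n a * pEn 0 b ≤ pEn 0 a * pEn n b := h
      _ ≤ (p * pEn 0 b) * pEn n b := mul_le_mul_of_nonneg_right hc (pEn_nonneg n hb.le)
      _ = (p * pEn n b) * pEn 0 b := by ring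
  exact le_of_mul_le_mul_right h2 h0b

lemma pow_mul_exp_neg_le (k : ℕ) {θ : ℝ} (hθ : 0 ≤ θ) :
    θ ^ k * Real.exp (-θ) ≤ (Nat.factorial k : ℝ) := by
  have hf : (0:ℝ) < (Nat.factorial k : ℝ) := by exact_mod_cast Nat.factorial_pos k
  have h1 : θ ^ k / (Nat.factorial k : ℝ) ≤ Real.exp θ := by
    rw [← exp_tsum']
    exact Summable.le_tsum (Real.summable_pow_div_factorial θ) k
      (fun j _ => div_nonneg (pow_nonneg hθ _) (Nat.cast_nonneg _))
  have h2 : θ ^ k ≤ Real.exp θ * (Nat.factorial k : ℝ) := by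
    rw [div_le_iff₀ hf] at h1; linarith
  calc θ ^ k * Real.exp (-θ) ≤ (Real.exp θ * (Nat.factorial k : ℝ)) * Real.exp (-θ) :=
        mul_le_mul_of_nonneg_right h2 (Real.exp_nonneg _)
    _ = (Nat.factorial k : ℝ) * (Real.exp θ * Real.exp (-θ)) := by ring
    _ = (Nat.factorial k : ℝ) := by rw [← Real.exp_add, add_neg_cancel, Real.exp_zero, mul_one]

lemma continuous_pFn (n : ℕ) : Continuous (pFn n) := by
  unfold pFn
  exact continuous_finset_sum _ fun k _ =>
    ((continuous_pow k).mul (Real.continuous_exp.comp continuous_neg)).div_const _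

lemma main_aux {Ω : Type*} [MeasurableSpace Ω] (P : Measure Ω) [IsProbabilityMeasure P]
    (Θ : Ω → ℝ) (hΘmeas : Measurable Θ) (hΘpos : ∀ ω, 0 < Θ ω)
    (lam lamb p : ℝ) (hlam : 0 < lam) (hlamle : lam ≤ lamb) (hp0 : 0 < p)
    (hchoice : 1 - Real.exp (-lam) ≤ p * (1 - Real.exp (-lamb)))
    (S : Set Ω) (hS : MeasurableSet S) (hPS : (P S).toReal ≤ 1 - p)
    (hge : ∀ ω, ω ∉ S → lamb ≤ Θ ω) (n : ℕ) :
    ∑ k ∈ Finset.range (n + 1),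
        (∫ ω, Θ ω ^ k * Real.exp (-(Θ ω)) ∂P) / (Nat.factorial k) ≤ pFn n lam := by
  have hlambpos : 0 < lamb := hlam.trans_le hlamle
  have hgmeas : ∀ k : ℕ, Measurable fun ω => Θ ω ^ k * Real.exp (-(Θ ω)) :=
    fun k => (hΘmeas.pow_const k).mul (hΘmeas.neg.exp)
  have hgint : ∀ k : ℕ, Integrable (fun ω => Θ ω ^ k * Real.exp (-(Θ ω))) P := by
    intro k
    refine (integrable_const ((Nat.factorial k : ℝ))).mono' (hgmeas k).aestronglyMeasurable ?_
    filter_upwards with ω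
    rw [Real.norm_eq_abs,
      abs_of_nonneg (mul_nonneg (pow_nonneg (hΘpos ω).le _) (Real.exp_nonneg _))]
    exact pow_mul_exp_neg_le k (hΘpos ω).le
  have hLHS : ∑ k ∈ Finset.range (n + 1),
      (∫ ω, Θ ω ^ k * Real.exp (-(Θ ω)) ∂P) / (Nat.factorial k)
      = ∫ ω, pFn n (Θ ω) ∂P := by
    have h1 : ∀ k ∈ Finset.range (n+1),
        (∫ ω, Θ ω ^ k * Real.exp (-(Θ ω)) ∂P) / (Nat.factorial k)
        = ∫ ω, Θ ω ^ k * Real.exp (-(Θ ω)) / (Nat.factorial k) ∂P :=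
      fun k _ => (integral_div _ _).symm
    rw [Finset.sum_congr rfl h1, ← integral_finset_sum _ (fun k _ => (hgint k).div_const _)]
    rfl
  have hFnΘ_meas : Measurable fun ω => pFn n (Θ ω) := (continuous_pFn n).measurable.comp hΘmeas
  have hFnΘ_int : Integrable (fun ω => pFn n (Θ ω)) P := by
    refine (integrable_const (1:ℝ)).mono' hFnΘ_meas.aestronglyMeasurable ?_
    filter_upwards with ω
    rw [Real.norm_eq_abs, abs_of_nonneg (pFn_nonneg n (hΘpos ω).le)]
    exact pFn_le_one n (hΘpos ω).le
  have h1mF : 0 ≤ 1 - pFn n lamb := by linarith [pFn_le_one n hlambpos.le]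
  have hbint : Integrable
      (fun ω => pFn n lamb + (1 - pFn n lamb) * S.indicator (fun _ => (1:ℝ)) ω) P :=
    (integrable_const _).add (((integrable_const (1:ℝ)).indicator hS).const_mul _)
  have hle : ∀ ω, pFn n (Θ ω)
      ≤ pFn n lamb + (1 - pFn n lamb) * S.indicator (fun _ => (1:ℝ)) ω := by
    intro ω
    by_cases hω : ω ∈ S
    · have := pFn_le_one n (hΘpos ω).le
      simp only [Set.indicator_of_mem hω]
      linarith
    · have := pFn_anti n hlambpos.le (hge ω hω)
      simp only [Set.indicator_of_notMem hω]
      linarith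
  have hmono := integral_mono hFnΘ_int hbint hle
  have hbval : ∫ ω, (pFn n lamb + (1 - pFn n lamb) * S.indicator (fun _ => (1:ℝ)) ω) ∂P
      = pFn n lamb + (1 - pFn n lamb) * (P S).toReal := by
    rw [integral_add (integrable_const _) (((integrable_const (1:ℝ)).indicator hS).const_mul _),
      integral_const, integral_const_mul, integral_indicator_const (1:ℝ) hS]
    simp [measure_univ, Measure.real]
  have htail := pEn_tail_bound hlam hlamle hp0 hchoice n
  have hFlam := pFn_add_pEn n lam
  have hFlamb := pFn_add_pEn n lamb
  have hfinal : pFn n lamb + (1 - pFn n lamb) * (P S).toReal ≤ pFn n lam := by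
    have h4 : (1 - pFn n lamb) * (P S).toReal ≤ (1 - pFn n lamb) * (1 - p) :=
      mul_le_mul_of_nonneg_left hPS h1mF
    nlinarith [htail, hFlam, hFlamb]
  rw [hLHS]
  calc ∫ ω, pFn n (Θ ω) ∂P
      ≤ ∫ ω, (pFn n lamb + (1 - pFn n lamb) * S.indicator (fun _ => (1:ℝ)) ω) ∂P := hmono
    _ = pFn n lamb + (1 - pFn n lamb) * (P S).toReal := hbval
    _ ≤ pFn n lam := hfinal

/-- Fix `c > 0`, an integer `d ≥ 2`, and a nonnegative real random variable `X`.
For every `lam > 0` there exists `μ_lam > 0` such that for all `μ ≥ μ_lam`, the mixed Poisson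
random variable with random parameter `c * μ * d^(-X)` stochastically dominates a Poisson random
variable with mean `lam`: for every `n`,
`∑_{k=0}^n E[(cμd^{-X})^k e^{-cμd^{-X}}]/k! ≤ ∑_{k=0}^n e^{-lam} lam^k/k!`. -/
theorem mixed_poisson_thinned_dominates
    {Ω : Type*} [MeasurableSpace Ω] (P : Measure Ω) [IsProbabilityMeasure P]
    (c : ℝ) (hc : 0 < c) (d : ℕ) (hd : 2 ≤ d)
    (X : Ω → ℝ) (hXmeas : Measurable X) (hXnonneg : ∀ ω, 0 ≤ X ω)
    (lam : ℝ) (hlam : 0 < lam) :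
    ∃ μlam : ℝ, 0 < μlam ∧ ∀ μ ≥ μlam, ∀ n : ℕ,
      ∑ k ∈ Finset.range (n + 1),
          (∫ ω, (c * μ * (d : ℝ) ^ (-X ω)) ^ k
              * Real.exp (-(c * μ * (d : ℝ) ^ (-X ω))) ∂P) / (Nat.factorial k)
        ≤ ∑ k ∈ Finset.range (n + 1),
            Real.exp (-lam) * lam ^ k / (Nat.factorial k) := by
  -- constants
  have hexplt : Real.exp (-lam) < 1 := by
    rw [Real.exp_lt_one_iff]; linarith
  set q0 : ℝ := 1 - Real.exp (-lam) with hq0def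
  have hq0pos : 0 < q0 := by simp only [hq0def]; linarith
  have hq0lt1 : q0 < 1 := by
    have := Real.exp_pos (-lam); simp only [hq0def]; linarith
  set p : ℝ := (q0 + 1) / 2 with hpdef
  have hq0p : q0 < p := by simp only [hpdef]; linarith
  have hp1 : p < 1 := by simp only [hpdef]; linarith
  have hp0 : 0 < p := by simp only [hpdef]; linarith
  have hpq : 0 < p - q0 := by linarith
  set lamb : ℝ := max lam (Real.log (p / (p - q0))) + 1 with hlambdef
  have hlamle : lam ≤ lamb := by
    have := le_max_left lam (Real.log (p / (p - q0)))
    simp only [hlambdef]; linarith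
  have hlambpos : 0 < lamb := hlam.trans_le hlamle
  have hchoice : 1 - Real.exp (-lam) ≤ p * (1 - Real.exp (-lamb)) := by
    have hxpos : 0 < p / (p - q0) := by positivity
    have h2 : Real.exp (-lamb) ≤ (p - q0) / p := by
      have hmono : Real.exp (-lamb) ≤ Real.exp (-(Real.log (p / (p - q0)))) := by
        apply Real.exp_le_exp.2
        have := le_max_right lam (Real.log (p / (p - q0)))
        simp only [hlambdef]; linarith
      have heq : Real.exp (-(Real.log (p / (p - q0)))) = (p - q0) / p := by
        rw [Real.exp_neg, Real.exp_log hxpos, inv_div]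
      linarith [hmono, heq.le, heq.ge]
    have hpe : p * ((p - q0) / p) = p - q0 := by field_simp
    have : p * (1 - Real.exp (-lamb)) ≥ p * (1 - (p - q0) / p) := by
      apply mul_le_mul_of_nonneg_left _ hp0.le
      linarith
    have heq : p * (1 - (p - q0) / p) = q0 := by field_simp; ring
    rw [← hq0def]; linarith
  -- choose the cutoff level m
  set A : ℕ → Set Ω := fun m => {ω | (m : ℝ) < X ω} with hAdef
  have hAmeas : ∀ m, MeasurableSet (A m) := fun m => hXmeas measurableSet_Ioi
  have hAanti : Antitone A := by
    intro i j hij ω hω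
    have : (i : ℝ) ≤ (j : ℝ) := by exact_mod_cast hij
    exact lt_of_le_of_lt this hω
  have hAempty : ⋂ m, A m = ∅ := by
    ext ω
    simp only [Set.mem_iInter, Set.mem_empty_iff_false, iff_false, not_forall]
    obtain ⟨m, hm⟩ := exists_nat_gt (X ω)
    exact ⟨m, by simp only [hAdef, Set.mem_setOf_eq, not_lt]; exact hm.le⟩
  have htend : Filter.Tendsto (P ∘ A) Filter.atTop (nhds 0) := by
    have h := tendsto_measure_iInter_atTop (μ := P)
      (fun i => (hAmeas i).nullMeasurableSet) hAanti ⟨0, measure_ne_top P _⟩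
    rwa [hAempty, measure_empty] at h
  have hev := htend.eventually_lt_const
    (show (0 : ENNReal) < ENNReal.ofReal (1 - p) from ENNReal.ofReal_pos.2 (by linarith))
  obtain ⟨m, hm⟩ := hev.exists
  have hPm : (P (A m)).toReal ≤ 1 - p :=
    ENNReal.toReal_le_of_le_ofReal (by linarith) hm.le
  -- base
  set D : ℝ := (d : ℝ) with hDdef
  have hD1 : 1 < D := by
    simp only [hDdef]
    exact_mod_cast lt_of_lt_of_le one_lt_two (by exact_mod_cast hd)
  have hD0 : 0 < D := lt_trans one_pos hD1
  have hDm : 0 < D ^ (m : ℕ) := pow_pos hD0 m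
  refine ⟨lamb * D ^ (m : ℕ) / c, by positivity, ?_⟩
  intro μ hμ n
  have hμpos : 0 < μ := lt_of_lt_of_le (by positivity) hμ
  have hΘmeas : Measurable fun ω => c * μ * D ^ (-X ω) := by
    have hmeas : Measurable fun ω => D ^ (-X ω) := by
      simp_rw [Real.rpow_def_of_pos hD0]
      exact (hXmeas.neg.const_mul _).exp
    exact hmeas.const_mul _
  have hΘpos : ∀ ω, 0 < c * μ * D ^ (-X ω) := fun ω => by
    have := Real.rpow_pos_of_pos hD0 (-X ω)
    positivity
  have hge : ∀ ω, ω ∉ A m → lamb ≤ c * μ * D ^ (-X ω) := by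
    intro ω hω
    have hXm : X ω ≤ (m : ℝ) := by
      simpa only [hAdef, Set.mem_setOf_eq, not_lt] using hω
    have h1 : D ^ (-(m : ℝ)) ≤ D ^ (-X ω) :=
      Real.rpow_le_rpow_of_exponent_le hD1.le (by linarith)
    have h2 : D ^ (m : ℕ) * D ^ (-(m : ℝ)) = 1 := by
      rw [← Real.rpow_natCast D m, ← Real.rpow_add hD0]
      simp
    have h3 : c * (lamb * D ^ (m : ℕ) / c) * D ^ (-(m : ℝ)) = lamb := by
      have hcc : c ≠ 0 := hc.ne'
      calc c * (lamb * D ^ (m : ℕ) / c) * D ^ (-(m : ℝ))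
          = lamb * (D ^ (m : ℕ) * D ^ (-(m : ℝ))) := by field_simp
        _ = lamb := by rw [h2, mul_one]
    have hr0 : 0 ≤ D ^ (-(m : ℝ)) := (Real.rpow_pos_of_pos hD0 _).le
    calc lamb = c * (lamb * D ^ (m : ℕ) / c) * D ^ (-(m : ℝ)) := h3.symm
      _ ≤ c * μ * D ^ (-(m : ℝ)) := by
          apply mul_le_mul_of_nonneg_right _ hr0
          exact mul_le_mul_of_nonneg_left hμ hc.le
      _ ≤ c * μ * D ^ (-X ω) := mul_le_mul_of_nonneg_left h1 (by positivity)
  have hmain := main_aux P (fun ω => c * μ * D ^ (-X ω)) hΘmeas hΘpos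
    lam lamb p hlam hlamle hp0 hchoice (A m) (hAmeas m) hPm hge n
  have hRHS : ∑ k ∈ Finset.range (n + 1), Real.exp (-lam) * lam ^ k / (Nat.factorial k)
      = pFn n lam := by
    unfold pFn
    exact Finset.sum_congr rfl fun k _ => by rw [mul_comm (Real.exp (-lam)) (lam ^ k)]
  rw [hRHS]
  exact hmain
end

section
/- Fix integers d ≥ 2 and n ≥ 1. For every binary array a = (a_{y,i}) ∈ {0,1}^{{1,...,n}×{1,...,d−1}}, the quantity h_n(a) satisfies the identity h_n(a) = 1 + Σ_{x=1}^n Σ_{j=1}^{d−1} Σ_{y=1}^n Σ_{i=1}^{d−1} (1 − a_{x,j}) a_{y,i} d^{−|x−y|−1} + (d−1) Σ_{x=1}^n Σ_{i=1}^{d−1} a_{x,i} d^{x−n−1}. -/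
/-!
After expanding the products, the quadratic terms agree because the kernel `d^(-|x-y|-1)` is
symmetric, and the linear terms match because `d^(y-n) = d * d^(y-n-1)` and each of the `n`
positions carries `d - 1` symbols. What remains is the telescoping geometric identity
`d^(-n) + (d - 1) * Σ_{x=1}^n d^(x-n-1) = 1`.
-/

open Finset

theorem sub_one_mul_sum_Icc_zpow_sub_sub_one {K : Type*} [Field K] {q : K} (hq : q ≠ 0) (n : ℕ) :
    (q - 1) * ∑ x ∈ Icc 1 n, q ^ ((x : ℤ) - n - 1) = 1 - q ^ (-(n : ℤ)) := by
  set f : ℕ → K := fun x => q ^ ((x : ℤ) - n - 1)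
  have telescope (x : ℕ) : (q - 1) * f x = f (x + 1) - f x := by
    simp only [f, Nat.cast_succ, add_sub_right_comm _ (1 : ℤ), zpow_add_one₀ hq]
    ring
  have hlast : f (n + 1) = 1 := by simp [f]
  have hfirst : f 1 = q ^ (-(n : ℤ)) := by simp [f]
  rw [mul_sum, sum_congr rfl fun x _ => telescope x, ← Ico_add_one_right_eq_Icc,
    sum_Ico_sub f (by omega), hlast, hfirst]

theorem sum_sum_one_sub_mul_add {ι κ R : Type*} [CommRing R] (s : Finset ι) (t : Finset κ)
    (a : ι → κ → R) (e : ι → R) (k : ι → ι → R) :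
    ∑ x ∈ s, ∑ j ∈ t, (1 - a x j) * (e x + ∑ y ∈ s, ∑ i ∈ t, a y i * k x y)
      = #t * ∑ x ∈ s, e x - ∑ x ∈ s, ∑ j ∈ t, a x j * e x
        + ∑ x ∈ s, ∑ j ∈ t, ∑ y ∈ s, ∑ i ∈ t, (1 - a x j) * a y i * k x y := by
  have expand (x : ι) (j : κ) :
      (1 - a x j) * (e x + ∑ y ∈ s, ∑ i ∈ t, a y i * k x y)
        = (e x - a x j * e x) + ∑ y ∈ s, ∑ i ∈ t, (1 - a x j) * a y i * k x y := by
    simp only [mul_add, mul_sum, mul_assoc]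
    ring
  simp only [expand, sum_add_distrib, sum_sub_distrib, sum_const, nsmul_eq_mul, mul_sum]

theorem h_expand_general
    (d n : ℕ) (hd : 2 ≤ d)
    (a : ℕ → ℕ → ℝ) :
    (d : ℝ) ^ (-(n : ℤ))
      + ∑ y ∈ Finset.Icc 1 n, ∑ i ∈ Finset.Icc 1 (d - 1),
          a y i * (d : ℝ) ^ ((y : ℤ) - (n : ℤ))
      + ∑ x ∈ Finset.Icc 1 n, ∑ j ∈ Finset.Icc 1 (d - 1),
          (1 - a x j) * ((d : ℝ) ^ ((x : ℤ) - (n : ℤ) - 1)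
            + ∑ y ∈ Finset.Icc 1 n, ∑ i ∈ Finset.Icc 1 (d - 1),
                a y i * (d : ℝ) ^ (-|(y : ℤ) - (x : ℤ)| - 1))
    = 1
      + ∑ x ∈ Finset.Icc 1 n, ∑ j ∈ Finset.Icc 1 (d - 1),
          ∑ y ∈ Finset.Icc 1 n, ∑ i ∈ Finset.Icc 1 (d - 1),
            (1 - a x j) * a y i * (d : ℝ) ^ (-|(x : ℤ) - (y : ℤ)| - 1)
      + ((d : ℝ) - 1) * ∑ x ∈ Finset.Icc 1 n, ∑ i ∈ Finset.Icc 1 (d - 1),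
          a x i * (d : ℝ) ^ ((x : ℤ) - (n : ℤ) - 1) := by
  have hd0 : (d : ℝ) ≠ 0 := by positivity
  have hcard : (#(Icc 1 (d - 1)) : ℝ) = d - 1 := by
    rw [Nat.card_Icc, Nat.add_sub_cancel, Nat.cast_pred (by omega)]
  have hshift : ∑ y ∈ Icc 1 n, ∑ i ∈ Icc 1 (d - 1), a y i * (d : ℝ) ^ ((y : ℤ) - n)
      = d * ∑ x ∈ Icc 1 n, ∑ i ∈ Icc 1 (d - 1), a x i * (d : ℝ) ^ ((x : ℤ) - n - 1) := by
    simp only [mul_sum, zpow_sub_one₀ hd0]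
    refine sum_congr rfl fun y _ => sum_congr rfl fun i _ => ?_
    field_simp
  simp only [abs_sub_comm (_ : ℤ) (_ : ℤ)]
  rw [hshift, sum_sum_one_sub_mul_add, hcard]
  linear_combination sub_one_mul_sum_Icc_zpow_sub_sub_one hd0 n

/-- For integers `d ≥ 2`, `n ≥ 1` and a binary array
`a = (a_{y,i})` indexed by `{1,…,n} × {1,…,d-1}`, the quantity `h_n(a)` equals
`1 + Σ_{x,j} Σ_{y,i} (1 - a_{x,j}) a_{y,i} d^{-|x-y|-1}
   + (d-1) Σ_{x,i} a_{x,i} d^{x-n-1}`. -/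
theorem h_expand
    (d n : ℕ) (hd : 2 ≤ d) (hn : 1 ≤ n)
    (a : ℕ → ℕ → ℝ)
    (ha : ∀ y ∈ Finset.Icc 1 n, ∀ i ∈ Finset.Icc 1 (d - 1), a y i = 0 ∨ a y i = 1) :
    (d : ℝ) ^ (-(n : ℤ))
      + ∑ y ∈ Finset.Icc 1 n, ∑ i ∈ Finset.Icc 1 (d - 1),
          a y i * (d : ℝ) ^ ((y : ℤ) - (n : ℤ))
      + ∑ x ∈ Finset.Icc 1 n, ∑ j ∈ Finset.Icc 1 (d - 1),
          (1 - a x j) * ((d : ℝ) ^ ((x : ℤ) - (n : ℤ) - 1)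
            + ∑ y ∈ Finset.Icc 1 n, ∑ i ∈ Finset.Icc 1 (d - 1),
                a y i * (d : ℝ) ^ (-|(y : ℤ) - (x : ℤ)| - 1))
    = 1
      + ∑ x ∈ Finset.Icc 1 n, ∑ j ∈ Finset.Icc 1 (d - 1),
          ∑ y ∈ Finset.Icc 1 n, ∑ i ∈ Finset.Icc 1 (d - 1),
            (1 - a x j) * a y i * (d : ℝ) ^ (-|(x : ℤ) - (y : ℤ)| - 1)
      + ((d : ℝ) - 1) * ∑ x ∈ Finset.Icc 1 n, ∑ i ∈ Finset.Icc 1 (d - 1),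
          a x i * (d : ℝ) ^ ((x : ℤ) - (n : ℤ) - 1) :=
  h_expand_general d n hd a
end

section
/- Fix integers d ≥ 2 and n ≥ 1. For every binary array a = (a_{y,i}) ∈ {0,1}^{{1,...,n}×{1,...,d−1}}, one has h_n(a) ≥ 1 + f_n(a)/d², where f_n(a) is the number of bit flips in the lexicographic reading of a. -/
/-!
The terms of `h_n(a)` not involving the double sum over pairs of cells already add up to at
least `1`: each cell of row `x` contributes at least `d^(x-n-1)` whether its bit is `0` or `1`, and these
lower bounds telescope, together with `d^(-n)`, to exactly `1`. In the remaining sum over pairs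
(a `0`-cell, a `1`-cell), every bit flip of the lexicographic reading exhibits such a pair of
consecutive cells, which lie in the same or in adjacent rows and hence contribute at least
`d^(-2)`; distinct flips give distinct pairs.
-/

open scoped Classical

open Finset

theorem sum_Icc_sub_eq {M : Type*} [AddCommGroup M] (f : ℤ → M) (n : ℕ) :
    ∑ x ∈ Icc 1 n, (f x - f (x - 1)) = f n - f 0 := by
  induction n with
  | zero => simp
  | succ n ih => rw [sum_Icc_succ_top (by omega), ih]; push_cast; rw [add_sub_cancel_right]; abel

theorem zpow_sub_one_le_mul_zpow_add {D t : ℝ} (hD : 1 ≤ D) (ht : 0 ≤ t) (e : ℤ) :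
    D ^ (e - 1) ≤ t * D ^ e + (1 - t) * D ^ (e - 1) := by
  have : D ^ (e - 1) ≤ D ^ e := zpow_le_zpow_right₀ hD (by omega)
  nlinarith

theorem one_le_zpow_neg_add_sum_add_sum {d n : ℕ} (hd : 1 ≤ d) {a : ℕ → ℕ → ℝ}
    (ha : ∀ y ∈ Icc 1 n, ∀ i ∈ Icc 1 (d - 1), 0 ≤ a y i) :
    1 ≤ (d : ℝ) ^ (-(n : ℤ))
      + ∑ y ∈ Icc 1 n, ∑ i ∈ Icc 1 (d - 1), a y i * (d : ℝ) ^ ((y : ℤ) - n)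
      + ∑ x ∈ Icc 1 n, ∑ j ∈ Icc 1 (d - 1), (1 - a x j) * (d : ℝ) ^ ((x : ℤ) - n - 1) := by
  have hD : (1 : ℝ) ≤ d := by exact_mod_cast hd
  have hrow : ∀ x ∈ Icc 1 n, (d : ℝ) ^ ((x : ℤ) - n) - (d : ℝ) ^ ((x : ℤ) - 1 - n) ≤
      ∑ j ∈ Icc 1 (d - 1),
        (a x j * (d : ℝ) ^ ((x : ℤ) - n) + (1 - a x j) * (d : ℝ) ^ ((x : ℤ) - n - 1)) := by
    intro x hx
    have hcard : (d : ℝ) ^ ((x : ℤ) - n) - (d : ℝ) ^ ((x : ℤ) - 1 - n)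
        = ∑ _j ∈ Icc 1 (d - 1), (d : ℝ) ^ ((x : ℤ) - n - 1) := by
      rw [sum_const, Nat.card_Icc, nsmul_eq_mul, Nat.add_sub_cancel, Nat.cast_sub hd,
        show (x : ℤ) - n = (x : ℤ) - n - 1 + 1 by ring, zpow_add_one₀ (by positivity)]
      ring_nf
    rw [hcard]
    exact sum_le_sum fun j hj => zpow_sub_one_le_mul_zpow_add hD (ha x hx j hj) _
  have htel := sum_le_sum hrow
  rw [sum_Icc_sub_eq (fun x : ℤ => (d : ℝ) ^ (x - n)), sub_self, zpow_zero, zero_sub] at htel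
  simp only [sum_add_distrib] at htel
  linarith

theorem card_nsmul_le_sum_of_injOn {ι κ M : Type*} [AddCommMonoid M] [PartialOrder M]
    [IsOrderedAddMonoid M] {s : Finset ι} {t : Finset κ} {f : ι → κ} {g : κ → M} {c : M}
    (hf : Set.MapsTo f s t) (hinj : Set.InjOn f s) (hc : ∀ i ∈ s, c ≤ g (f i))
    (hg : ∀ j ∈ t, 0 ≤ g j) : #s • c ≤ ∑ j ∈ t, g j :=
  calc #s • c ≤ ∑ i ∈ s, g (f i) := card_nsmul_le_sum _ _ _ hc
    _ = ∑ j ∈ s.image f, g j := (sum_image hinj).symm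
    _ ≤ ∑ j ∈ t, g j :=
      sum_le_sum_of_subset_of_nonneg (image_subset_iff.2 hf) fun j hj _ => hg j hj

/-- Positions `k` of the reading start at `1`; rows have length `m`. -/
def lexCell (m k : ℕ) : ℕ × ℕ := ((k - 1) / m + 1, (k - 1) % m + 1)

def lexPos (m : ℕ) (c : ℕ × ℕ) : ℕ := (c.1 - 1) * m + c.2

theorem lexPos_lexCell {m k : ℕ} (hk : 1 ≤ k) : lexPos m (lexCell m k) = k := by
  have := Nat.div_add_mod (k - 1) m
  simp only [lexPos, lexCell, Nat.add_sub_cancel]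
  rw [mul_comm]
  omega

theorem lexCell_mem {m n k : ℕ} (hk : k ∈ Icc 1 (m * n)) :
    lexCell m k ∈ Icc 1 n ×ˢ Icc 1 m := by
  rw [mem_Icc] at hk
  have hm : 0 < m := Nat.pos_of_ne_zero (by rintro rfl; omega)
  have hrow : (k - 1) / m < n := (Nat.div_lt_iff_lt_mul hm).2 (by rw [mul_comm]; omega)
  have hcol := Nat.mod_lt (k - 1) hm
  simp only [lexCell, mem_product, mem_Icc]
  exact ⟨⟨Nat.le_add_left _ _, hrow⟩, Nat.le_add_left _ _, hcol⟩

theorem abs_fst_lexCell_succ_sub_le (m k : ℕ) :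
    |((lexCell m (k + 1)).1 : ℤ) - (lexCell m k).1| ≤ 1 := by
  cases k with
  | zero => simp [lexCell]
  | succ j =>
    have := Nat.succ_div (a := j) (b := m)
    simp only [lexCell, Nat.add_sub_cancel]
    rw [abs_le]
    split_ifs at this <;> constructor <;> omega

noncomputable def orient (a : ℕ → ℕ → ℝ) (u v : ℕ × ℕ) : (ℕ × ℕ) × (ℕ × ℕ) :=
  if a u.1 u.2 = 0 then (u, v) else (v, u)

noncomputable def crossWeight (D : ℝ) (a : ℕ → ℕ → ℝ) (p : (ℕ × ℕ) × (ℕ × ℕ)) : ℝ :=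
  (1 - a p.1.1 p.1.2) * (a p.2.1 p.2.2 * D ^ (-|(p.2.1 : ℤ) - p.1.1| - 1))

theorem orient_mem {a : ℕ → ℕ → ℝ} {u v : ℕ × ℕ} {s : Finset (ℕ × ℕ)} (hu : u ∈ s) (hv : v ∈ s) :
    orient a u v ∈ s ×ˢ s := by
  unfold orient; split_ifs <;> simp [hu, hv]

theorem min_lexPos_orient (m : ℕ) (a : ℕ → ℕ → ℝ) (u v : ℕ × ℕ) :
    min (lexPos m (orient a u v).1) (lexPos m (orient a u v).2) =
      min (lexPos m u) (lexPos m v) := by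
  unfold orient; split_ifs
  · rfl
  · exact min_comm _ _

theorem crossWeight_nonneg {D : ℝ} (hD : 0 < D) {a : ℕ → ℕ → ℝ} {p : (ℕ × ℕ) × (ℕ × ℕ)}
    (h₁ : a p.1.1 p.1.2 ≤ 1) (h₂ : 0 ≤ a p.2.1 p.2.2) : 0 ≤ crossWeight D a p :=
  mul_nonneg (sub_nonneg.2 h₁) (mul_nonneg h₂ (zpow_pos hD _).le)

theorem zpow_neg_two_le_crossWeight_orient {D : ℝ} (hD : 1 ≤ D) {a : ℕ → ℕ → ℝ} {u v : ℕ × ℕ}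
    (hu : a u.1 u.2 = 0 ∨ a u.1 u.2 = 1) (hv : a v.1 v.2 = 0 ∨ a v.1 v.2 = 1)
    (hne : a u.1 u.2 ≠ a v.1 v.2) (hrow : |(v.1 : ℤ) - u.1| ≤ 1) :
    D ^ (-2 : ℤ) ≤ crossWeight D a (orient a u v) := by
  have hpow : ∀ e : ℤ, |e| ≤ 1 → D ^ (-2 : ℤ) ≤ D ^ (-|e| - 1) := fun e he =>
    zpow_le_zpow_right₀ hD (by omega)
  rcases hu with hu | hu <;> rcases hv with hv | hv
  · exact absurd (hu.trans hv.symm) hne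
  · rw [orient, if_pos hu, crossWeight, hu, hv]
    simpa using hpow _ hrow
  · rw [orient, if_neg (by rw [hu]; exact one_ne_zero), crossWeight, hu, hv]
    simpa using hpow _ (by rwa [abs_sub_comm])
  · exact absurd (hu.trans hv.symm) hne

theorem card_flips_div_sq_le_cross {m n : ℕ} {D : ℝ} (hD : 1 ≤ D) {a : ℕ → ℕ → ℝ}
    (ha : ∀ y ∈ Icc 1 n, ∀ i ∈ Icc 1 m, a y i = 0 ∨ a y i = 1) {b : ℕ → ℝ}
    (hb : ∀ y ∈ Icc 1 n, ∀ i ∈ Icc 1 m, b ((y - 1) * m + i) = a y i) :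
    (#((Icc 1 (m * n - 1)).filter (fun k => b k ≠ b (k + 1))) : ℝ) / D ^ 2 ≤
      ∑ x ∈ Icc 1 n, ∑ j ∈ Icc 1 m, (1 - a x j) *
        ∑ y ∈ Icc 1 n, ∑ i ∈ Icc 1 m, a y i * D ^ (-|(y : ℤ) - x| - 1) := by
  set P := Icc 1 n ×ˢ Icc 1 m
  have hcell : ∀ k ∈ Icc 1 (m * n),
      lexCell m k ∈ P ∧ b k = a (lexCell m k).1 (lexCell m k).2 := by
    intro k hk
    have hP := lexCell_mem hk
    refine ⟨hP, ?_⟩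
    rw [mem_product] at hP
    rw [← hb _ hP.1 _ hP.2, ← lexPos, lexPos_lexCell (mem_Icc.1 hk).1]
  have hflip : ∀ k ∈ (Icc 1 (m * n - 1)).filter (fun k => b k ≠ b (k + 1)),
      1 ≤ k ∧ (lexCell m k ∈ P ∧ b k = a (lexCell m k).1 (lexCell m k).2) ∧
      (lexCell m (k + 1) ∈ P ∧ b (k + 1) = a (lexCell m (k + 1)).1 (lexCell m (k + 1)).2) ∧
      b k ≠ b (k + 1) := by
    intro k hk
    simp only [mem_filter, mem_Icc] at hk
    exact ⟨hk.1.1, hcell k (mem_Icc.2 ⟨by omega, by omega⟩),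
      hcell (k + 1) (mem_Icc.2 ⟨by omega, by omega⟩), hk.2⟩
  have hsum : ∑ x ∈ Icc 1 n, ∑ j ∈ Icc 1 m, (1 - a x j) *
        ∑ y ∈ Icc 1 n, ∑ i ∈ Icc 1 m, a y i * D ^ (-|(y : ℤ) - x| - 1)
      = ∑ p ∈ P ×ˢ P, crossWeight D a p := by
    simp only [P, sum_product, mul_sum, crossWeight]
  rw [hsum, div_eq_mul_inv, ← zpow_ofNat, ← zpow_neg, ← nsmul_eq_mul]
  -- a flip `k` is recovered from its pair of cells as the smaller of their two positions
  refine card_nsmul_le_sum_of_injOn (f := fun k => orient a (lexCell m k) (lexCell m (k + 1)))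
    (fun k hk => ?_) (Set.LeftInvOn.injOn (f₁' := fun p => min (lexPos m p.1) (lexPos m p.2))
      fun k hk => ?_) (fun k hk => ?_) (fun p hp => ?_)
  · obtain ⟨-, ⟨hk, -⟩, ⟨hk', -⟩, -⟩ := hflip k hk
    exact orient_mem hk hk'
  · obtain ⟨hk1, -⟩ := hflip k hk
    simp only [min_lexPos_orient, lexPos_lexCell hk1, lexPos_lexCell (Nat.le_add_left 1 k)]
    omega
  · obtain ⟨-, ⟨hk, hbk⟩, ⟨hk', hbk'⟩, hne⟩ := hflip k hk
    rw [mem_product] at hk hk'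
    rw [hbk, hbk'] at hne
    exact zpow_neg_two_le_crossWeight_orient hD (ha _ hk.1 _ hk.2) (ha _ hk'.1 _ hk'.2) hne
      (abs_fst_lexCell_succ_sub_le m k)
  · simp only [P, mem_product] at hp
    apply crossWeight_nonneg (by linarith)
    · rcases ha _ hp.1.1 _ hp.1.2 with h | h <;> simp [h]
    · rcases ha _ hp.2.1 _ hp.2.2 with h | h <;> simp [h]

theorem h_ge_one_add_flips_general
    (d n : ℕ) (hd : 2 ≤ d)
    (a : ℕ → ℕ → ℝ)
    (ha : ∀ y ∈ Finset.Icc 1 n, ∀ i ∈ Finset.Icc 1 (d - 1), a y i = 0 ∨ a y i = 1)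
    (b : ℕ → ℝ)
    (hb : ∀ y ∈ Finset.Icc 1 n, ∀ i ∈ Finset.Icc 1 (d - 1), b ((y - 1) * (d - 1) + i) = a y i) :
    (d : ℝ) ^ (-(n : ℤ))
      + ∑ y ∈ Finset.Icc 1 n, ∑ i ∈ Finset.Icc 1 (d - 1),
          a y i * (d : ℝ) ^ ((y : ℤ) - (n : ℤ))
      + ∑ x ∈ Finset.Icc 1 n, ∑ j ∈ Finset.Icc 1 (d - 1),
          (1 - a x j) * ((d : ℝ) ^ ((x : ℤ) - (n : ℤ) - 1)
            + ∑ y ∈ Finset.Icc 1 n, ∑ i ∈ Finset.Icc 1 (d - 1),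
                a y i * (d : ℝ) ^ (-|(y : ℤ) - (x : ℤ)| - 1))
    ≥ 1 + (((Finset.Icc 1 ((d - 1) * n - 1)).filter
              (fun k => b k ≠ b (k + 1))).card : ℝ) / (d : ℝ) ^ 2 := by
  have hdiag := one_le_zpow_neg_add_sum_add_sum (by omega : 1 ≤ d) fun y hy i hi =>
    (ha y hy i hi).elim (fun h => h.ge) (fun h => by rw [h]; exact zero_le_one)
  have hcross := card_flips_div_sq_le_cross (D := d) (by exact_mod_cast (by omega : 1 ≤ d)) ha hb
  simp only [mul_add, sum_add_distrib]
  linarith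

/-- For integers `d ≥ 2`, `n ≥ 1` and a binary array
`a = (a_{y,i})` indexed by `{1,…,n} × {1,…,d-1}`, one has `h_n(a) ≥ 1 + f_n(a)/d²`,
where `f_n(a)` is the number of bit flips in the lexicographic reading
`b_{(y-1)(d-1)+i} = a_{y,i}` of `a`. -/
theorem h_ge_one_add_flips
    (d n : ℕ) (hd : 2 ≤ d) (hn : 1 ≤ n)
    (a : ℕ → ℕ → ℝ)
    (ha : ∀ y ∈ Finset.Icc 1 n, ∀ i ∈ Finset.Icc 1 (d - 1), a y i = 0 ∨ a y i = 1)
    (b : ℕ → ℝ)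
    (hb : ∀ y ∈ Finset.Icc 1 n, ∀ i ∈ Finset.Icc 1 (d - 1), b ((y - 1) * (d - 1) + i) = a y i) :
    (d : ℝ) ^ (-(n : ℤ))
      + ∑ y ∈ Finset.Icc 1 n, ∑ i ∈ Finset.Icc 1 (d - 1),
          a y i * (d : ℝ) ^ ((y : ℤ) - (n : ℤ))
      + ∑ x ∈ Finset.Icc 1 n, ∑ j ∈ Finset.Icc 1 (d - 1),
          (1 - a x j) * ((d : ℝ) ^ ((x : ℤ) - (n : ℤ) - 1)
            + ∑ y ∈ Finset.Icc 1 n, ∑ i ∈ Finset.Icc 1 (d - 1),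
                a y i * (d : ℝ) ^ (-|(y : ℤ) - (x : ℤ)| - 1))
    ≥ 1 + (((Finset.Icc 1 ((d - 1) * n - 1)).filter
              (fun k => b k ≠ b (k + 1))).card : ℝ) / (d : ℝ) ^ 2 :=
  h_ge_one_add_flips_general d n hd a ha b hb
end

section
/- Fix integers d ≥ 2 and n ≥ 1 and a real λ ≥ 0. If a is sampled uniformly at random from {0,1}^{{1,...,n}×{1,...,d−1}}, then E[e^{−λ h_n(a)}] ≤ e^{−λ} · 2^{−(d−1)n+1} · (1 + e^{−λ/d²})^{(d−1)n−1}; equivalently, Σ_{a ∈ {0,1}^{{1,...,n}×{1,...,d−1}}} e^{−λ h_n(a)} ≤ 2 e^{−λ} (1 + e^{−λ/d²})^{(d−1)n−1}. -/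
open Finset

/-- Equivalence between `(Fin n → Bool) × Bool` and `Fin (n+1) → Bool` via `snoc`. -/
def snocEquivBool (M : ℕ) : ((Fin M → Bool) × Bool) ≃ (Fin (M+1) → Bool) where
  toFun p := Fin.snoc p.1 p.2
  invFun b := (Fin.init b, b (Fin.last M))
  left_inv p := by simp [Fin.init_snoc, Fin.snoc_last]
  right_inv b := by simp [Fin.snoc_init_self]

lemma sum_prod_changes (M : ℕ) (t : ℝ) :
    ∑ b : Fin (M+1) → Bool, ∏ k : Fin M,
        (if b k.castSucc = b k.succ then (1:ℝ) else t)
      = 2 * (1+t)^M := by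
  induction M with
  | zero => simp [Finset.sum_const]
  | succ M ih =>
    rw [← (snocEquivBool (M+1)).sum_comp
      (fun b => ∏ k : Fin (M+1), (if b k.castSucc = b k.succ then (1:ℝ) else t))]
    rw [Fintype.sum_prod_type]
    have key : ∀ (b : Fin (M+1) → Bool) (x : Bool),
        (∏ k : Fin (M+1),
          (if (Fin.snoc b x : Fin (M+2) → Bool) k.castSucc
              = (Fin.snoc b x : Fin (M+2) → Bool) k.succ then (1:ℝ) else t))
        = (∏ k : Fin M, (if b k.castSucc = b k.succ then (1:ℝ) else t))
            * (if b (Fin.last M) = x then (1:ℝ) else t) := by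
      intro b x
      rw [Fin.prod_univ_castSucc]
      congr 1
      · apply Finset.prod_congr rfl
        intro k _
        rw [Fin.succ_castSucc, Fin.snoc_castSucc, Fin.snoc_castSucc]
      · rw [Fin.succ_last, Fin.snoc_castSucc, Fin.snoc_last]
    calc ∑ b : Fin (M+1) → Bool, ∑ x : Bool,
          (∏ k : Fin (M+1),
            (if (snocEquivBool (M+1) (b, x)) k.castSucc
                = (snocEquivBool (M+1) (b, x)) k.succ then (1:ℝ) else t))
        = ∑ b : Fin (M+1) → Bool,
            (∏ k : Fin M, (if b k.castSucc = b k.succ then (1:ℝ) else t)) * (1+t) := by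
          apply Finset.sum_congr rfl
          intro b _
          rw [Fintype.sum_bool]
          simp only [snocEquivBool, Equiv.coe_fn_mk]
          show (∏ k : Fin (M+1), (if (Fin.snoc b true : Fin (M+2) → Bool) k.castSucc = (Fin.snoc b true : Fin (M+2) → Bool) k.succ then (1:ℝ) else t)) + (∏ k : Fin (M+1), (if (Fin.snoc b false : Fin (M+2) → Bool) k.castSucc = (Fin.snoc b false : Fin (M+2) → Bool) k.succ then (1:ℝ) else t)) = _
          rw [key b true, key b false]
          cases h : b (Fin.last M) <;> simp [h] <;> ring
      _ = 2 * (1+t)^(M+1) := by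
          rw [← Finset.sum_mul, ih]; ring

/-- The quantity `h_n(a)` for a binary array `a` indexed (0-based) by
`Fin n × Fin (d-1)`, where entry `(y, i)` of the array corresponds to the 1-based
index `(y+1, i+1) ∈ {1,…,n} × {1,…,d-1}` of the paper. -/
noncomputable def thresholdFrogH (d n : ℕ) (a : Fin n → Fin (d - 1) → Bool) : ℝ :=
  (d : ℝ) ^ (-(n : ℤ))
    + ∑ y : Fin n, ∑ i : Fin (d - 1),
        (if a y i then (1 : ℝ) else 0) * (d : ℝ) ^ (((y : ℕ) : ℤ) + 1 - (n : ℤ))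
    + ∑ x : Fin n, ∑ j : Fin (d - 1),
        (1 - (if a x j then (1 : ℝ) else 0)) *
          ((d : ℝ) ^ (((x : ℕ) : ℤ) + 1 - (n : ℤ) - 1)
            + ∑ y : Fin n, ∑ i : Fin (d - 1),
                (if a y i then (1 : ℝ) else 0) *
                  (d : ℝ) ^ (-|(((y : ℕ) : ℤ) + 1) - (((x : ℕ) : ℤ) + 1)| - 1))

lemma h_ge_one_add (d n : ℕ) (hd : 2 ≤ d) (a : Fin n → Fin (d-1) → Bool) :
    1 + (∑ x : Fin n, ∑ j : Fin (d-1), (1 - (if a x j then (1:ℝ) else 0)) *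
        ∑ y : Fin n, ∑ i : Fin (d-1), (if a y i then (1:ℝ) else 0) *
          (d : ℝ) ^ (-|(((y : ℕ) : ℤ) + 1) - (((x : ℕ) : ℤ) + 1)| - 1))
      ≤ thresholdFrogH d n a := by
  have hd2 : (2:ℝ) ≤ (d:ℝ) := by exact_mod_cast hd
  have hd1 : (1:ℝ) ≤ (d:ℝ) := by linarith
  have hdne : (d:ℝ) ≠ 1 := by linarith
  have hd0 : (d:ℝ) ≠ 0 := by linarith
  unfold thresholdFrogH
  simp only [mul_add, Finset.sum_add_distrib]
  have hT1 : (∑ y : Fin n, ∑ i : Fin (d-1),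
        (if a y i then (1:ℝ) else 0) * (d:ℝ) ^ (((y:ℕ):ℤ) + 1 - (n:ℤ) - 1))
      ≤ ∑ y : Fin n, ∑ i : Fin (d-1),
        (if a y i then (1:ℝ) else 0) * (d:ℝ) ^ (((y:ℕ):ℤ) + 1 - (n:ℤ)) := by
    apply Finset.sum_le_sum; intro y _
    apply Finset.sum_le_sum; intro i _
    apply mul_le_mul_of_nonneg_left
    · exact zpow_le_zpow_right₀ hd1 (by omega)
    · split <;> norm_num
  have hsum : (∑ y : Fin n, ∑ i : Fin (d-1),
        (if a y i then (1:ℝ) else 0) * (d:ℝ) ^ (((y:ℕ):ℤ) + 1 - (n:ℤ) - 1))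
      + (∑ x : Fin n, ∑ j : Fin (d-1),
        (1 - (if a x j then (1:ℝ) else 0)) * (d:ℝ) ^ (((x:ℕ):ℤ) + 1 - (n:ℤ) - 1))
      = ∑ x : Fin n, ∑ _j : Fin (d-1), (d:ℝ) ^ (((x:ℕ):ℤ) + 1 - (n:ℤ) - 1) := by
    rw [← Finset.sum_add_distrib]
    apply Finset.sum_congr rfl; intro x _
    rw [← Finset.sum_add_distrib]
    apply Finset.sum_congr rfl; intro j _
    ring
  have hgeom : (∑ x : Fin n, ∑ _j : Fin (d-1), (d:ℝ) ^ (((x:ℕ):ℤ) + 1 - (n:ℤ) - 1))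
      = 1 - (d:ℝ) ^ (-(n:ℤ)) := by
    have step1 : (∑ x : Fin n, ∑ _j : Fin (d-1), (d:ℝ) ^ (((x:ℕ):ℤ) + 1 - (n:ℤ) - 1))
        = ((d-1:ℕ):ℝ) * ((∑ x : Fin n, (d:ℝ)^(x:ℕ)) * (d:ℝ) ^ (-(n:ℤ))) := by
      have : ∀ x : Fin n, (∑ _j : Fin (d-1), (d:ℝ) ^ (((x:ℕ):ℤ) + 1 - (n:ℤ) - 1))
          = ((d-1:ℕ):ℝ) * ((d:ℝ)^(x:ℕ) * (d:ℝ) ^ (-(n:ℤ))) := by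
        intro x
        rw [Finset.sum_const, Finset.card_univ, Fintype.card_fin, nsmul_eq_mul]
        congr 1
        rw [show ((x:ℕ):ℤ) + 1 - (n:ℤ) - 1 = ((x:ℕ):ℤ) + (-(n:ℤ)) from by ring,
          zpow_add₀ hd0, zpow_natCast]
      rw [Finset.sum_congr rfl (fun x _ => this x), ← Finset.mul_sum, ← Finset.sum_mul]
    rw [step1, Fin.sum_univ_eq_sum_range (fun x => (d:ℝ)^x) n, geom_sum_eq hdne]
    have hcast : ((d-1:ℕ):ℝ) = (d:ℝ) - 1 := by
      have : 1 ≤ d := by omega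
      push_cast [Nat.cast_sub this]
      ring
    rw [hcast, zpow_neg, zpow_natCast]
    have hdn : (d:ℝ)^n ≠ 0 := by positivity
    have hd1' : (d:ℝ) - 1 ≠ 0 := sub_ne_zero.mpr hdne
    field_simp
  linarith


noncomputable def pairW (d n : ℕ) (A : Fin n → Fin (d-1) → Bool)
    (p : (Fin n × Fin (d-1)) × (Fin n × Fin (d-1))) : ℝ :=
  (1 - (if A p.1.1 p.1.2 then (1:ℝ) else 0)) *
    ((if A p.2.1 p.2.2 then (1:ℝ) else 0) *
      (d : ℝ) ^ (-|(((p.2.1 : ℕ) : ℤ) + 1) - (((p.1.1 : ℕ) : ℤ) + 1)| - 1))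

def pairF (n D M : ℕ) (e : Fin (M+1) → Fin n × Fin D) (b : Fin (M+1) → Bool)
    (k : Fin M) : (Fin n × Fin D) × (Fin n × Fin D) :=
  if b k.castSucc then (e k.succ, e k.castSucc) else (e k.castSucc, e k.succ)

lemma pairW_nonneg (d n : ℕ) (A : Fin n → Fin (d-1) → Bool) (hd : 1 ≤ d)
    (p : (Fin n × Fin (d-1)) × (Fin n × Fin (d-1))) : 0 ≤ pairW d n A p := by
  unfold pairW
  have hd0 : (0:ℝ) < (d:ℝ) := by exact_mod_cast hd
  have h1 : (0:ℝ) ≤ 1 - (if A p.1.1 p.1.2 then (1:ℝ) else 0) := by split <;> norm_num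
  have h2 : (0:ℝ) ≤ (if A p.2.1 p.2.2 then (1:ℝ) else 0) := by split <;> norm_num
  exact mul_nonneg h1 (mul_nonneg h2 (le_of_lt (zpow_pos hd0 _)))

lemma pairF_injective {n D M : ℕ} {e : Fin (M+1) → Fin n × Fin D}
    (heinj : Function.Injective e) (b : Fin (M+1) → Bool) :
    Function.Injective (pairF n D M e b) := by
  intro k k' h
  unfold pairF at h
  split_ifs at h <;> rw [Prod.mk.injEq] at h <;> obtain ⟨ha, hb'⟩ := h <;>
  · have e1 := congrArg Fin.val (heinj ha)
    have e2 := congrArg Fin.val (heinj hb')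
    simp only [Fin.val_succ, Fin.coe_castSucc] at e1 e2
    exact Fin.ext (by omega)

lemma pair_sum_bound (d n M : ℕ) (hd : 2 ≤ d)
    (e : Fin (M+1) → Fin n × Fin (d-1)) (heinj : Function.Injective e)
    (hlev : ∀ u : Fin (M+1), (((e u).1 : ℕ)) = (u : ℕ) / (d-1))
    (A : Fin n → Fin (d-1) → Bool) (b : Fin (M+1) → Bool)
    (hab : ∀ u : Fin (M+1), A (e u).1 (e u).2 = b u) :
    ((Finset.univ.filter (fun k : Fin M => ¬ (b k.castSucc = b k.succ))).card : ℝ)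
        * (d:ℝ) ^ (-2 : ℤ)
      ≤ ∑ p : (Fin n × Fin (d-1)) × (Fin n × Fin (d-1)), pairW d n A p := by
  have hd1 : (1:ℝ) ≤ (d:ℝ) := by exact_mod_cast Nat.one_le_of_lt hd
  have hdiv : ∀ m : ℕ, m/(d-1) ≤ (m+1)/(d-1) ∧ (m+1)/(d-1) ≤ m/(d-1) + 1 := by
    intro m
    constructor
    · exact Nat.div_le_div_right (Nat.le_succ _)
    · calc (m+1)/(d-1) ≤ (m+(d-1))/(d-1) := Nat.div_le_div_right (by omega)
        _ = m/(d-1) + 1 := Nat.add_div_right _ (by omega)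
  have hzpow : ∀ u v : Fin (M+1), ((u:ℕ) = (v:ℕ)+1 ∨ (v:ℕ) = (u:ℕ)+1) →
      A (e u).1 (e u).2 = false → A (e v).1 (e v).2 = true →
      (d:ℝ) ^ (-2 : ℤ) ≤ pairW d n A (e u, e v) := by
    intro u v huv h0 h1
    unfold pairW
    simp only [h0, h1, if_true, if_false]
    have habs : |((((e v).1 : ℕ) : ℤ) + 1) - ((((e u).1 : ℕ) : ℤ) + 1)| ≤ 1 := by
      rw [hlev u, hlev v, abs_le]
      rcases huv with h | h
      · obtain ⟨q1, q2⟩ := hdiv (v:ℕ)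
        rw [h]
        omega
      · obtain ⟨q1, q2⟩ := hdiv (u:ℕ)
        rw [h]
        omega
    have := zpow_le_zpow_right₀ hd1 (show (-2:ℤ) ≤ -|((((e v).1 : ℕ) : ℤ) + 1) - ((((e u).1 : ℕ) : ℤ) + 1)| - 1 by omega)
    simpa using this
  calc ((Finset.univ.filter (fun k : Fin M => ¬ (b k.castSucc = b k.succ))).card : ℝ)
        * (d:ℝ) ^ (-2 : ℤ)
      = ∑ _k ∈ Finset.univ.filter (fun k : Fin M => ¬ (b k.castSucc = b k.succ)),
          (d:ℝ) ^ (-2 : ℤ) := by rw [Finset.sum_const, nsmul_eq_mul]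
    _ ≤ ∑ k ∈ Finset.univ.filter (fun k : Fin M => ¬ (b k.castSucc = b k.succ)),
          pairW d n A (pairF n (d-1) M e b k) := by
        apply Finset.sum_le_sum
        intro k hk
        rw [Finset.mem_filter] at hk
        have hne := hk.2
        cases hcs : b k.castSucc
        · have hsucc : b k.succ = true := by
            cases hbs : b k.succ
            · exact absurd (by rw [hcs, hbs]) hne
            · rfl
          have h0 : A (e k.castSucc).1 (e k.castSucc).2 = false := by rw [hab]; exact hcs
          have h1 : A (e k.succ).1 (e k.succ).2 = true := by rw [hab]; exact hsucc
          have := hzpow k.castSucc k.succ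
            (Or.inr (by simp [Fin.val_succ, Fin.coe_castSucc])) h0 h1
          simpa [pairF, hcs] using this
        · have hsucc : b k.succ = false := by
            cases hbs : b k.succ
            · rfl
            · exact absurd (by rw [hcs, hbs]) hne
          have h0 : A (e k.succ).1 (e k.succ).2 = false := by rw [hab]; exact hsucc
          have h1 : A (e k.castSucc).1 (e k.castSucc).2 = true := by rw [hab]; exact hcs
          have := hzpow k.succ k.castSucc
            (Or.inl (by simp [Fin.val_succ, Fin.coe_castSucc])) h0 h1
          simpa [pairF, hcs] using this
    _ = ∑ p ∈ (Finset.univ.filter (fun k : Fin M => ¬ (b k.castSucc = b k.succ))).image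
          (pairF n (d-1) M e b), pairW d n A p := by
        rw [Finset.sum_image (fun k _ k' _ h => pairF_injective heinj b h)]
    _ ≤ ∑ p : (Fin n × Fin (d-1)) × (Fin n × Fin (d-1)), pairW d n A p := by
        apply Finset.sum_le_sum_of_subset_of_nonneg (Finset.subset_univ _)
        intro p _ _
        exact pairW_nonneg d n A (by omega) p

/-- For integers `d ≥ 2`, `n ≥ 1` and real `lam ≥ 0`, a uniformly random
binary array `a ∈ {0,1}^{{1,…,n} × {1,…,d-1}}` satisfies
`E[e^{-lam h_n(a)}] ≤ e^{-lam} 2^{-(d-1)n+1} (1 + e^{-lam/d²})^{(d-1)n-1}`; equivalently,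
`Σ_a e^{-lam h_n(a)} ≤ 2 e^{-lam} (1 + e^{-lam/d²})^{(d-1)n-1}`. -/
theorem sum_exp_neg_h_le
    (d n : ℕ) (hd : 2 ≤ d) (hn : 1 ≤ n) (lam : ℝ) (hlam : 0 ≤ lam) :
    ∑ a : Fin n → Fin (d - 1) → Bool, Real.exp (-lam * thresholdFrogH d n a)
      ≤ 2 * Real.exp (-lam)
          * (1 + Real.exp (-lam / (d : ℝ) ^ 2)) ^ ((d - 1) * n - 1) := by
  have hD1 : 1 ≤ d - 1 := by omega
  obtain ⟨M, hM⟩ : ∃ M, n * (d-1) = M + 1 := by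
    refine ⟨n * (d-1) - 1, ?_⟩
    have := Nat.mul_le_mul hn hD1
    omega
  have hMeq : (d-1) * n - 1 = M := by
    have h' : (d-1) * n = n * (d-1) := Nat.mul_comm _ _
    omega
  rw [hMeq]
  set t := Real.exp (-lam / (d : ℝ) ^ 2) with ht
  have hdR : (0:ℝ) < (d:ℝ) := by
    have : 0 < d := by omega
    exact_mod_cast this
  have hdne : (d:ℝ) ≠ 0 := ne_of_gt hdR
  -- the equivalence between linear indices and array indices
  let pi : Fin (M+1) ≃ Fin n × Fin (d-1) := (finCongr hM.symm).trans finProdFinEquiv.symm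
  let E : (Fin (M+1) → Bool) ≃ (Fin n → Fin (d-1) → Bool) :=
    (Equiv.arrowCongr pi (Equiv.refl Bool)).trans (Equiv.curry _ _ _)
  have hA : ∀ (b : Fin (M+1) → Bool) (u : Fin (M+1)), E b (pi u).1 (pi u).2 = b u := by
    intro b u
    show b (pi.symm ((pi u).1, (pi u).2)) = b u
    rw [show ((pi u).1, (pi u).2) = pi u from rfl, Equiv.symm_apply_apply]
  have hlev : ∀ u : Fin (M+1), (((pi u).1 : ℕ)) = (u : ℕ) / (d-1) := fun u => rfl
  rw [← Fintype.sum_equiv E (fun b => Real.exp (-lam * thresholdFrogH d n (E b)))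
    (fun a => Real.exp (-lam * thresholdFrogH d n a)) (fun b => rfl)]
  have hbound : ∀ b : Fin (M+1) → Bool,
      Real.exp (-lam * thresholdFrogH d n (E b))
      ≤ Real.exp (-lam) * ∏ k : Fin M, (if b k.castSucc = b k.succ then (1:ℝ) else t) := by
    intro b
    set c : ℕ := (Finset.univ.filter (fun k : Fin M => ¬ (b k.castSucc = b k.succ))).card with hc
    have hP := pair_sum_bound d n M hd (fun u => pi u) (fun u u' h => pi.injective h)
      hlev (E b) b (hA b)
    have hPw : (∑ p : (Fin n × Fin (d-1)) × (Fin n × Fin (d-1)), pairW d n (E b) p)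
        = ∑ x : Fin n, ∑ j : Fin (d-1), (1 - (if E b x j then (1:ℝ) else 0)) *
            ∑ y : Fin n, ∑ i : Fin (d-1), (if E b y i then (1:ℝ) else 0) *
              (d : ℝ) ^ (-|(((y : ℕ) : ℤ) + 1) - (((x : ℕ) : ℤ) + 1)| - 1) := by
      simp only [pairW, Fintype.sum_prod_type, Finset.mul_sum]
    rw [hPw] at hP
    have hH := h_ge_one_add d n hd (E b)
    have hH2 : 1 + (c:ℝ) * (d:ℝ) ^ (-2 : ℤ) ≤ thresholdFrogH d n (E b) := by linarith
    have hprod : (∏ k : Fin M, (if b k.castSucc = b k.succ then (1:ℝ) else t)) = t ^ c := by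
      rw [Finset.prod_ite, Finset.prod_const_one, one_mul, Finset.prod_const, hc]
    rw [hprod]
    have hexp : Real.exp (-lam) * t ^ c = Real.exp (-lam * (1 + (c:ℝ) * (d:ℝ) ^ (-2 : ℤ))) := by
      rw [ht, ← Real.exp_nat_mul, ← Real.exp_add]
      congr 1
      rw [show (d:ℝ) ^ (-2 : ℤ) = ((d:ℝ) ^ (2:ℕ))⁻¹ by
        rw [zpow_neg, show ((2:ℤ)) = ((2:ℕ):ℤ) from rfl, zpow_natCast]]
      field_simp
      ring
    rw [hexp]
    apply Real.exp_le_exp.mpr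
    have := mul_le_mul_of_nonneg_left hH2 hlam
    nlinarith
  calc ∑ b : Fin (M+1) → Bool, Real.exp (-lam * thresholdFrogH d n (E b))
      ≤ ∑ b : Fin (M+1) → Bool,
          Real.exp (-lam) * ∏ k : Fin M, (if b k.castSucc = b k.succ then (1:ℝ) else t) :=
        Finset.sum_le_sum (fun b _ => hbound b)
    _ = Real.exp (-lam) * (2 * (1+t)^M) := by
        rw [← Finset.mul_sum, sum_prod_changes M t]
    _ = 2 * Real.exp (-lam) * (1+t)^M := by ring
end

section
/- Let d ≥ 2 be an integer and let α ∈ (0,1]. There exist μ₀, λ₀ ≥ 0 such that for all μ ≥ μ₀ and all λ ≥ λ₀, Σ_{n=1}^∞ exp(−(μ/(d+1)) d^{−n+1}) · 2 (1 + e^{−λ/d²})^{(d−1)n−1} · α (1−α)^{n−1} ≤ e^{−1}. -/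
set_option maxHeartbeats 2000000 in
/-- Let `d ≥ 2` and `α ∈ (0,1]`. There exist `μ₀, lam₀ ≥ 0` such that for all
`μ ≥ μ₀` and `lam ≥ lam₀`,
`Σ_{n=1}^∞ exp(-(μ/(d+1)) d^{-n+1}) · 2 (1 + e^{-lam/d²})^{(d-1)n - 1} · α (1-α)^{n-1} ≤ e^{-1}`.
(The series is written below with `n = m + 1`, `m` ranging over `ℕ`.) -/
theorem geometric_series_bound
    (d : ℕ) (hd : 2 ≤ d) (α : ℝ) (hα0 : 0 < α) (hα1 : α ≤ 1) :
    ∃ μ₀ lam₀ : ℝ, 0 ≤ μ₀ ∧ 0 ≤ lam₀ ∧ ∀ μ ≥ μ₀, ∀ lam ≥ lam₀,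
      (∑' m : ℕ,
          Real.exp (-(μ / ((d : ℝ) + 1)) * (d : ℝ) ^ (-((m : ℤ) + 1) + 1))
            * (2 * (1 + Real.exp (-lam / (d : ℝ) ^ 2)) ^ ((d - 1) * (m + 1) - 1))
            * (α * (1 - α) ^ m))
        ≤ Real.exp (-1) := by
  have hd1 : (1:ℝ) ≤ (d:ℝ) := by exact_mod_cast Nat.one_le_of_lt hd
  have hd0 : (0:ℝ) < (d:ℝ) := by linarith
  set r : ℝ := Real.exp (α/2) * (1 - α) with hr
  have hr0 : 0 ≤ r := mul_nonneg (Real.exp_nonneg _) (by linarith)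
  have hr1 : r < 1 := by
    have h1 : 1 - α ≤ Real.exp (-α) := by
      have := Real.add_one_le_exp (-α); linarith
    have h2 : r ≤ Real.exp (α/2) * Real.exp (-α) :=
      mul_le_mul_of_nonneg_left h1 (Real.exp_nonneg _)
    rw [← Real.exp_add] at h2
    calc r ≤ Real.exp (α/2 + -α) := h2
      _ < 1 := by rw [Real.exp_lt_one_iff]; linarith
  obtain ⟨N, hN⟩ := exists_pow_lt_of_lt_one
    (show (0:ℝ) < (1-r)*Real.exp (-1)/8 by
      have : 0 < 1 - r := by linarith
      positivity) hr1
  set L : ℝ := Real.log (8*((N:ℝ)+1)*Real.exp 1) with hLdef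
  have hL0 : 0 ≤ L := Real.log_nonneg (by
    have : (1:ℝ) ≤ Real.exp 1 := by linarith [Real.add_one_le_exp (1:ℝ)]
    nlinarith [Nat.cast_nonneg (α := ℝ) N])
  have hlog2 : 0 ≤ Real.log (2*(d:ℝ)/α) := Real.log_nonneg (by
    rw [le_div_iff₀ hα0]; linarith)
  refine ⟨((d:ℝ)+1) * (d:ℝ)^N * L, (d:ℝ)^2 * Real.log (2*(d:ℝ)/α), by positivity, by positivity, ?_⟩
  intro μ hμ lam hlam
  have hμ0 : 0 ≤ μ := le_trans (by positivity) hμ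
  -- bound on exp(-lam/d²)
  have hε : Real.exp (-lam / (d:ℝ)^2) ≤ α/(2*(d:ℝ)) := by
    have h1 : Real.log (2*(d:ℝ)/α) ≤ lam / (d:ℝ)^2 := by
      rw [le_div_iff₀ (by positivity)]
      calc Real.log (2*(d:ℝ)/α) * (d:ℝ)^2 = (d:ℝ)^2 * Real.log (2*(d:ℝ)/α) := by ring
        _ ≤ lam := hlam
    have h2 : -lam/(d:ℝ)^2 ≤ -Real.log (2*(d:ℝ)/α) := by
      rw [neg_div]; linarith
    calc Real.exp (-lam / (d:ℝ)^2) ≤ Real.exp (-Real.log (2*(d:ℝ)/α)) := Real.exp_le_exp.2 h2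
      _ = α/(2*(d:ℝ)) := by
          rw [Real.exp_neg, Real.exp_log (by positivity), inv_div]
  have hbase : 1 + Real.exp (-lam/(d:ℝ)^2) ≤ Real.exp (α/(2*(d:ℝ))) := by
    have := Real.add_one_le_exp (α/(2*(d:ℝ)))
    linarith
  set f : ℕ → ℝ := fun m =>
      Real.exp (-(μ / ((d : ℝ) + 1)) * (d : ℝ) ^ (-((m : ℤ) + 1) + 1))
        * (2 * (1 + Real.exp (-lam / (d : ℝ) ^ 2)) ^ ((d - 1) * (m + 1) - 1))
        * (α * (1 - α) ^ m) with hfdef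
  have hf0 : ∀ m, 0 ≤ f m := by
    intro m
    have h1 : (0:ℝ) ≤ 1 - α := by linarith
    have h2 : (0:ℝ) ≤ 1 + Real.exp (-lam / (d:ℝ)^2) := by positivity
    simp only [hfdef]
    positivity
  have key : ∀ m : ℕ, f m ≤
      Real.exp (-(μ/((d:ℝ)+1)) * ((d:ℝ)^m)⁻¹) * (4 * r^m) := by
    intro m
    have e1 : (d:ℝ) ^ (-((m:ℤ)+1)+1) = ((d:ℝ)^m)⁻¹ := by
      rw [show (-((m:ℤ)+1)+1) = -(m:ℤ) by ring, zpow_neg, zpow_natCast]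
    have hbpos : (0:ℝ) ≤ 1 + Real.exp (-lam/(d:ℝ)^2) := by positivity
    have hk : ((d-1)*(m+1) - 1 : ℕ) ≤ (d-1)*(m+1) := Nat.sub_le _ _
    have hb1 : (1 + Real.exp (-lam/(d:ℝ)^2)) ^ ((d-1)*(m+1) - 1)
        ≤ Real.exp (α/(2*(d:ℝ))) ^ ((d-1)*(m+1)) := by
      calc (1 + Real.exp (-lam/(d:ℝ)^2)) ^ ((d-1)*(m+1) - 1)
          ≤ Real.exp (α/(2*(d:ℝ))) ^ ((d-1)*(m+1)-1) := pow_le_pow_left₀ hbpos hbase _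
        _ ≤ Real.exp (α/(2*(d:ℝ))) ^ ((d-1)*(m+1)) :=
            pow_le_pow_right₀ (Real.one_le_exp (by positivity)) hk
    have hb2 : Real.exp (α/(2*(d:ℝ))) ^ ((d-1)*(m+1)) ≤ Real.exp (α*((m:ℝ)+1)/2) := by
      rw [← Real.exp_nat_mul]
      apply Real.exp_le_exp.2
      have hcast : (((d-1)*(m+1) : ℕ) : ℝ) = ((d:ℝ)-1)*((m:ℝ)+1) := by
        push_cast [Nat.cast_sub (by omega : 1 ≤ d)]; ring
      rw [hcast]
      have h3 : ((d:ℝ)-1)*((m:ℝ)+1) * (α/(2*(d:ℝ))) ≤ (d:ℝ)*((m:ℝ)+1) * (α/(2*(d:ℝ))) := by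
        have hm0 : (0:ℝ) ≤ (m:ℝ)+1 := by positivity
        have : ((d:ℝ)-1) ≤ (d:ℝ) := by linarith
        gcongr
      calc ((d:ℝ)-1)*((m:ℝ)+1) * (α/(2*(d:ℝ))) ≤ (d:ℝ)*((m:ℝ)+1) * (α/(2*(d:ℝ))) := h3
        _ = α*((m:ℝ)+1)/2 := by field_simp
    have hexp2 : Real.exp (α*((m:ℝ)+1)/2) = Real.exp (α/2) * Real.exp (α/2)^m := by
      rw [show α*((m:ℝ)+1)/2 = α/2 + (m:ℝ)*(α/2) by ring, Real.exp_add, Real.exp_nat_mul]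
    have hE0 : 0 ≤ Real.exp (-(μ / ((d : ℝ) + 1)) * (d : ℝ) ^ (-((m:ℤ)+1)+1)) :=
      Real.exp_nonneg _
    have h1α : (0:ℝ) ≤ 1 - α := by linarith
    have step1 : f m ≤
        Real.exp (-(μ / ((d : ℝ) + 1)) * (d : ℝ) ^ (-((m:ℤ)+1)+1))
          * (2 * Real.exp (α*((m:ℝ)+1)/2)) * (α * (1-α)^m) := by
      simp only [hfdef]
      gcongr
      exact hb1.trans hb2
    have step2 : Real.exp (-(μ / ((d : ℝ) + 1)) * (d : ℝ) ^ (-((m:ℤ)+1)+1))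
          * (2 * Real.exp (α*((m:ℝ)+1)/2)) * (α * (1-α)^m)
        = Real.exp (-(μ/((d:ℝ)+1)) * ((d:ℝ)^m)⁻¹) * ((2*α*Real.exp (α/2)) * r^m) := by
      rw [e1, hexp2, hr, mul_pow]; ring
    have hexphalf : Real.exp (α/2) ≤ 2 := by
      have h2 : Real.exp (α/2) ≤ Real.exp (1/2) := Real.exp_le_exp.2 (by linarith)
      have h3 : Real.exp (1/2) < 2 := by
        have h4 := Real.exp_lt_exp.2 (show (1:ℝ)/2 < Real.log 2 by linarith [Real.log_two_gt_d9])
        rwa [Real.exp_log two_pos] at h4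
      linarith
    have step3 : (2*α*Real.exp (α/2)) * r^m ≤ 4 * r^m := by
      have h5 : 2*α*Real.exp (α/2) ≤ 4 := by nlinarith [Real.exp_nonneg (α/2), hexphalf]
      exact mul_le_mul_of_nonneg_right h5 (pow_nonneg hr0 m)
    calc f m ≤ _ := step1
      _ = Real.exp (-(μ/((d:ℝ)+1)) * ((d:ℝ)^m)⁻¹) * ((2*α*Real.exp (α/2)) * r^m) := step2
      _ ≤ Real.exp (-(μ/((d:ℝ)+1)) * ((d:ℝ)^m)⁻¹) * (4 * r^m) := by
          exact mul_le_mul_of_nonneg_left step3 (Real.exp_nonneg _)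
  have hfg : ∀ m, f m ≤ 4 * r^m := by
    intro m
    have h1 : Real.exp (-(μ/((d:ℝ)+1)) * ((d:ℝ)^m)⁻¹) ≤ 1 := by
      rw [Real.exp_le_one_iff]
      have : (0:ℝ) ≤ (μ/((d:ℝ)+1)) * ((d:ℝ)^m)⁻¹ := by positivity
      linarith
    have h2 : (0:ℝ) ≤ 4 * r^m := by positivity
    calc f m ≤ Real.exp (-(μ/((d:ℝ)+1)) * ((d:ℝ)^m)⁻¹) * (4 * r^m) := key m
      _ ≤ 1 * (4 * r^m) := mul_le_mul_of_nonneg_right h1 h2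
      _ = 4 * r^m := one_mul _
  have hsum : Summable f :=
    Summable.of_nonneg_of_le hf0 hfg ((summable_geometric_of_lt_one hr0 hr1).mul_left 4)
  rw [show (∑' m : ℕ,
          Real.exp (-(μ / ((d : ℝ) + 1)) * (d : ℝ) ^ (-((m : ℤ) + 1) + 1))
            * (2 * (1 + Real.exp (-lam / (d : ℝ) ^ 2)) ^ ((d - 1) * (m + 1) - 1))
            * (α * (1 - α) ^ m)) = ∑' m, f m from rfl,
      ← Summable.sum_add_tsum_nat_add N hsum]
  -- head bound
  have hENpos : (0:ℝ) < (d:ℝ)^N := by positivity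
  have hEN : Real.exp (-(μ/((d:ℝ)+1)) * ((d:ℝ)^N)⁻¹) ≤ Real.exp (-1)/(8*((N:ℝ)+1)) := by
    have h1 : (d:ℝ)^N * L ≤ μ/((d:ℝ)+1) := by
      rw [le_div_iff₀ (by linarith)]
      calc (d:ℝ)^N * L * ((d:ℝ)+1) = ((d:ℝ)+1) * (d:ℝ)^N * L := by ring
        _ ≤ μ := hμ
    have h2 : L ≤ (μ/((d:ℝ)+1)) * ((d:ℝ)^N)⁻¹ := by
      rw [← div_eq_mul_inv, le_div_iff₀ hENpos]
      calc L * (d:ℝ)^N = (d:ℝ)^N * L := by ring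
        _ ≤ μ/((d:ℝ)+1) := h1
    have h3 : Real.exp (-(μ/((d:ℝ)+1)) * ((d:ℝ)^N)⁻¹) ≤ Real.exp (-L) := by
      apply Real.exp_le_exp.2
      have : -(μ/((d:ℝ)+1)) * ((d:ℝ)^N)⁻¹ = -((μ/((d:ℝ)+1)) * ((d:ℝ)^N)⁻¹) := by ring
      rw [this]; linarith
    have h4 : Real.exp (-L) = Real.exp (-1)/(8*((N:ℝ)+1)) := by
      rw [hLdef, Real.exp_neg, Real.exp_log (by positivity), Real.exp_neg, mul_inv,
        div_eq_mul_inv, mul_comm]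
    rw [← h4]; exact h3
  have hhead : ∑ m ∈ Finset.range N, f m ≤ Real.exp (-1)/2 := by
    have hterm : ∀ m ∈ Finset.range N, f m ≤ 4 * (Real.exp (-1)/(8*((N:ℝ)+1))) := by
      intro m hm
      rw [Finset.mem_range] at hm
      have hdm : (d:ℝ)^m ≤ (d:ℝ)^N := pow_le_pow_right₀ hd1 hm.le
      have hinv : ((d:ℝ)^N)⁻¹ ≤ ((d:ℝ)^m)⁻¹ := by
        apply inv_anti₀ (by positivity) hdm
      have hE : Real.exp (-(μ/((d:ℝ)+1)) * ((d:ℝ)^m)⁻¹)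
          ≤ Real.exp (-(μ/((d:ℝ)+1)) * ((d:ℝ)^N)⁻¹) := by
        apply Real.exp_le_exp.2
        have hc : 0 ≤ μ/((d:ℝ)+1) := by positivity
        nlinarith
      have hr1m : r^m ≤ 1 := pow_le_one₀ hr0 hr1.le
      calc f m ≤ Real.exp (-(μ/((d:ℝ)+1)) * ((d:ℝ)^m)⁻¹) * (4 * r^m) := key m
        _ ≤ Real.exp (-(μ/((d:ℝ)+1)) * ((d:ℝ)^N)⁻¹) * (4 * 1) := by
            apply mul_le_mul hE (by nlinarith [pow_nonneg hr0 m]) (by positivity) (Real.exp_nonneg _)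
        _ ≤ (Real.exp (-1)/(8*((N:ℝ)+1))) * (4*1) := by
            apply mul_le_mul_of_nonneg_right hEN (by norm_num)
        _ = 4 * (Real.exp (-1)/(8*((N:ℝ)+1))) := by ring
    calc ∑ m ∈ Finset.range N, f m ≤ ∑ m ∈ Finset.range N, 4 * (Real.exp (-1)/(8*((N:ℝ)+1))) :=
          Finset.sum_le_sum hterm
      _ = (N:ℝ) * (4 * (Real.exp (-1)/(8*((N:ℝ)+1)))) := by
          rw [Finset.sum_const, Finset.card_range, nsmul_eq_mul]
      _ = Real.exp (-1) * ((4*(N:ℝ))/(8*((N:ℝ)+1))) := by ring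
      _ ≤ Real.exp (-1) * (1/2) := by
          apply mul_le_mul_of_nonneg_left _ (Real.exp_pos _).le
          rw [div_le_div_iff₀ (by positivity) (by norm_num)]
          linarith [Nat.cast_nonneg (α := ℝ) N]
      _ = Real.exp (-1)/2 := by ring
  -- tail bound
  have hsumtail : Summable (fun m => f (m + N)) := (summable_nat_add_iff N).2 hsum
  have htail : ∑' m, f (m + N) ≤ Real.exp (-1)/2 := by
    have h1 : ∀ m, f (m+N) ≤ (4*r^N) * r^m := by
      intro m
      calc f (m+N) ≤ 4 * r^(m+N) := hfg (m+N)
        _ = (4*r^N)*r^m := by rw [pow_add]; ring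
    have hgs : Summable (fun m : ℕ => (4*r^N) * r^m) :=
      (summable_geometric_of_lt_one hr0 hr1).mul_left _
    calc ∑' m, f (m + N) ≤ ∑' m : ℕ, (4*r^N) * r^m := Summable.tsum_le_tsum h1 hsumtail hgs
      _ = (4*r^N) * (1-r)⁻¹ := by rw [tsum_mul_left, tsum_geometric_of_lt_one hr0 hr1]
      _ ≤ Real.exp (-1)/2 := by
          have h1r : (0:ℝ) < 1 - r := by linarith
          rw [mul_inv_le_iff₀ h1r]
          nlinarith [pow_nonneg hr0 N, Real.exp_pos (-1:ℝ)]
  linarith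
end
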